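/- arXiv:1909.03740 — 7 statements merged into one kernel-verified Lean document; each statement's English description precedes it below -/
import Mathlib

section
/- Let K be a tight set of (possibly nonfinite) Borel measures on [0,∞). Then there exists a strictly increasing function ψ : [0,∞) → [0,∞) with ψ(0) = 0, ψ(s) → ∞ as s → ∞ and sup_{ν∈K} ∫₀^∞ ψ(s) dν(s) < ∞ if and only if sup_{ν∈K} ν((s,∞)) < ∞ for all s > 0. -/
open MeasureTheory Filter Set Topology NNReal ENNReal

/-!
Necessity is Markov's inequality `ψ s * ν (Ioi s) ≤ ∫⁻ ψ ∂ν`, with `ψ s > 0` for `s > 0`.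

For sufficiency, `ψ` is a sum of weighted ramps, a ramp rising linearly from `0` to `1` on
`(a, b]` and therefore being dominated by the indicator of `(a, ∞)`, so that its integral
against `ν` is at most `ν (Ioi a)`. Ramps on the dyadic intervals `(2 ^ k, 2 ^ (k + 1)]`,
`k : ℤ`, with positive weights `δ k` such that `∑ δ k * (sup_K ν (Ioi (2 ^ k)) + 1) < 1`,
give a bounded strictly increasing function with integrals at most `1`. Unit ramps on
`(t n, t n + 1]`, where tightness provides `n ≤ t n` and `sup_K ν (Ioi (t n)) ≤ 2⁻¹ ^ n`,
give a function tending to infinity with integrals at most `∑ 2⁻¹ ^ n = 2`.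
-/

noncomputable section

/-- Identically `0` when `b ≤ a`, as `b - a` is then truncated to `0`. -/
def ramp (a b s : ℝ≥0) : ℝ≥0 := min ((s - a) / (b - a)) 1

lemma ramp_monotone (a b : ℝ≥0) : Monotone (ramp a b) := fun s s' h => by
  unfold ramp
  gcongr

lemma ramp_eq_zero_of_le {a b s : ℝ≥0} (h : s ≤ a) : ramp a b s = 0 := by
  simp [ramp, tsub_eq_zero_of_le h]

lemma ramp_le_one (a b s : ℝ≥0) : ramp a b s ≤ 1 := min_le_right _ _

lemma ramp_eq_one_of_le {a b s : ℝ≥0} (hab : a < b) (h : b ≤ s) : ramp a b s = 1 :=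
  min_eq_right ((one_le_div (tsub_pos_of_lt hab)).2 (by gcongr))

lemma ramp_lt_ramp {a b s s' : ℝ≥0} (ha : a < s') (hb : s' ≤ b) (h : s < s') :
    ramp a b s < ramp a b s' := by
  have hba : 0 < b - a := tsub_pos_of_lt (ha.trans_le hb)
  have hs' : ramp a b s' = (s' - a) / (b - a) :=
    min_eq_left ((div_le_one hba).2 (by gcongr))
  have hsub : s - a < s' - a := by
    rcases le_total s a with hs | hs
    · rw [tsub_eq_zero_of_le hs]
      exact tsub_pos_of_lt ha
    · exact tsub_lt_tsub_right_of_le hs h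
  rw [hs']
  exact (min_le_left _ _).trans_lt (div_lt_div_of_pos_right hsub hba)

lemma lintegral_ramp_le (ν : Measure ℝ≥0) (a b : ℝ≥0) :
    ∫⁻ s, (ramp a b s : ℝ≥0∞) ∂ν ≤ ν (Ioi a) := by
  calc ∫⁻ s, (ramp a b s : ℝ≥0∞) ∂ν ≤ ∫⁻ s, (Ioi a).indicator 1 s ∂ν := by
        refine lintegral_mono fun s => ?_
        rcases le_or_gt s a with hs | hs
        · simp [ramp_eq_zero_of_le hs]
        · simpa [indicator_of_mem (mem_Ioi.2 hs)] using ramp_le_one a b s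
    _ = ν (Ioi a) := lintegral_indicator_one measurableSet_Ioi

def rampSeries {ι : Type*} (c a b : ι → ℝ≥0) (s : ℝ≥0) : ℝ≥0 :=
  ∑' i, c i * ramp (a i) (b i) s

section RampSeries

variable {ι : Type*} {c a b : ι → ℝ≥0}

lemma rampSeries_apply_zero (c a b : ι → ℝ≥0) : rampSeries c a b 0 = 0 := by
  simp [rampSeries, ramp_eq_zero_of_le]

lemma rampSeries_monotone (hsum : ∀ s, Summable fun i => c i * ramp (a i) (b i) s) :
    Monotone (rampSeries c a b) := fun s s' h =>
  (hsum s).tsum_le_tsum (fun i => by gcongr; exact ramp_monotone _ _ h) (hsum s')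

lemma rampSeries_lt_rampSeries (hsum : ∀ s, Summable fun i => c i * ramp (a i) (b i) s)
    {i : ι} {s s' : ℝ≥0} (hc : 0 < c i) (ha : a i < s') (hb : s' ≤ b i) (h : s < s') :
    rampSeries c a b s < rampSeries c a b s' :=
  NNReal.tsum_lt_tsum (fun j => by gcongr; exact ramp_monotone _ _ h.le)
    (mul_lt_mul_of_pos_left (ramp_lt_ramp ha hb h) hc) (hsum s')

lemma lintegral_rampSeries_le [Countable ι]
    (hsum : ∀ s, Summable fun i => c i * ramp (a i) (b i) s) (ν : Measure ℝ≥0) :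
    ∫⁻ s, (rampSeries c a b s : ℝ≥0∞) ∂ν ≤ ∑' i, c i * ν (Ioi (a i)) := by
  simp only [rampSeries, ENNReal.coe_tsum (hsum _), ENNReal.coe_mul]
  rw [lintegral_tsum fun i =>
    ((ramp_monotone _ _).measurable.coe_nnreal_ennreal.const_mul _).aemeasurable]
  refine ENNReal.tsum_le_tsum fun i => ?_
  rw [lintegral_const_mul _ (ramp_monotone _ _).measurable.coe_nnreal_ennreal]
  gcongr
  exact lintegral_ramp_le ν _ _

end RampSeries

lemma mul_measure_Ioi_le_lintegral {ψ : ℝ≥0 → ℝ≥0} (hψ : Monotone ψ) (ν : Measure ℝ≥0)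
    (s : ℝ≥0) : ψ s * ν (Ioi s) ≤ ∫⁻ u, (ψ u : ℝ≥0∞) ∂ν :=
  calc (ψ s : ℝ≥0∞) * ν (Ioi s) ≤ ψ s * ν {u | (ψ s : ℝ≥0∞) ≤ ψ u} := by
        gcongr
        intro u hu
        exact ENNReal.coe_le_coe.2 (hψ (le_of_lt hu))
    _ ≤ ∫⁻ u, (ψ u : ℝ≥0∞) ∂ν :=
        mul_meas_ge_le_lintegral₀ hψ.measurable.coe_nnreal_ennreal.aemeasurable _

lemma biSup_measure_Ioi_lt_top {K : Set (Measure ℝ≥0)} {ψ : ℝ≥0 → ℝ≥0} (hψ : Monotone ψ)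
    {s : ℝ≥0} (hs : ψ s ≠ 0) (hK : (⨆ ν ∈ K, ∫⁻ u, (ψ u : ℝ≥0∞) ∂ν) < ⊤) :
    (⨆ ν ∈ K, ν (Ioi s)) < ⊤ := by
  have hs' : (ψ s : ℝ≥0∞) ≠ 0 := by exact_mod_cast hs
  calc ⨆ ν ∈ K, ν (Ioi s) ≤ (⨆ ν ∈ K, ∫⁻ u, (ψ u : ℝ≥0∞) ∂ν) / ψ s :=
        iSup₂_le fun ν hν => (ENNReal.le_div_iff_mul_le (.inl hs') (.inl coe_ne_top)).2 <| by
          rw [mul_comm]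
          exact (mul_measure_Ioi_le_lintegral hψ ν s).trans
            (le_biSup (fun ν => ∫⁻ u, (ψ u : ℝ≥0∞) ∂ν) hν)
    _ < ⊤ := ENNReal.div_lt_top hK.ne hs'

lemma exists_strictMono_lintegral_le_one (K : Set (Measure ℝ≥0))
    (hK : ∀ s : ℝ≥0, 0 < s → (⨆ ν ∈ K, ν (Ioi s)) < ⊤) :
    ∃ φ : ℝ≥0 → ℝ≥0, StrictMono φ ∧ φ 0 = 0 ∧ ∀ ν ∈ K, ∫⁻ s, (φ s : ℝ≥0∞) ∂ν ≤ 1 := by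
  obtain ⟨δ, hδ_pos, hδ_sum⟩ := ENNReal.exists_pos_tsum_mul_lt_of_countable one_ne_zero
    (fun k : ℤ => (⨆ ν ∈ K, ν (Ioi ((2 : ℝ≥0) ^ k))) + 1)
    (fun k => (ENNReal.add_lt_top.2 ⟨hK _ (zpow_pos two_pos k), one_lt_top⟩).ne)
  have hδ : Summable δ := by
    refine ENNReal.tsum_coe_ne_top_iff_summable.1 (ne_top_of_le_ne_top one_ne_top ?_)
    refine le_trans (ENNReal.tsum_le_tsum fun k => ?_) hδ_sum.le
    exact le_mul_of_one_le_left zero_le le_add_self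
  have hsum : ∀ s, Summable fun k => δ k * ramp (2 ^ k) (2 ^ (k + 1)) s := fun s =>
    NNReal.summable_of_le (fun k => mul_le_of_le_one_right zero_le (ramp_le_one _ _ _)) hδ
  refine ⟨rampSeries δ (fun k => 2 ^ k) (fun k => 2 ^ (k + 1)), fun s s' h => ?_, rampSeries_apply_zero _ _ _,
    fun ν hν => ?_⟩
  · obtain ⟨k, hk₁, hk₂⟩ := NNReal.exists_mem_Ioc_zpow (pos_of_gt h).ne' one_lt_two
    exact rampSeries_lt_rampSeries hsum (hδ_pos k) hk₁ hk₂ h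
  · calc ∫⁻ s, (rampSeries δ (fun k => 2 ^ k) (fun k => 2 ^ (k + 1)) s : ℝ≥0∞) ∂ν
          ≤ ∑' k : ℤ, δ k * ν (Ioi (2 ^ k)) := lintegral_rampSeries_le hsum ν
      _ ≤ ∑' k : ℤ, ((⨆ ν ∈ K, ν (Ioi (2 ^ k))) + 1) * δ k := by
          refine ENNReal.tsum_le_tsum fun k => ?_
          rw [mul_comm]
          gcongr
          exact (le_biSup (fun ν => ν (Ioi (2 ^ k))) hν).trans le_self_add
      _ ≤ 1 := hδ_sum.le

lemma exists_tendsto_atTop_lintegral_le_two (K : Set (Measure ℝ≥0))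
    (htight : Tendsto (fun s : ℝ≥0 => ⨆ ν ∈ K, ν (Ioi s)) atTop (𝓝 0)) :
    ∃ φ : ℝ≥0 → ℝ≥0, Monotone φ ∧ φ 0 = 0 ∧ Tendsto φ atTop atTop ∧
      ∀ ν ∈ K, ∫⁻ s, (φ s : ℝ≥0∞) ∂ν ≤ 2 := by
  have ht : ∀ n : ℕ, ∃ t : ℝ≥0, (n : ℝ≥0) ≤ t ∧ (⨆ ν ∈ K, ν (Ioi t)) ≤ 2⁻¹ ^ n := fun n =>
    ((eventually_ge_atTop _).and
      (htight.eventually (ge_mem_nhds (ENNReal.pow_pos (by norm_num) n)))).exists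
  choose t ht_ge ht_le using ht
  have hsum : ∀ s, Summable fun n => (1 : ℕ → ℝ≥0) n * ramp (t n) (t n + 1) s := fun s =>
    summable_of_ne_finset_zero (s := Finset.range ⌈s⌉₊) fun n hn => by
      rw [ramp_eq_zero_of_le, mul_zero]
      calc s ≤ ⌈s⌉₊ := Nat.le_ceil s
        _ ≤ n := by exact_mod_cast not_lt.1 (Finset.mem_range.not.1 hn)
        _ ≤ t n := ht_ge n
  refine ⟨rampSeries 1 t (t · + 1), rampSeries_monotone hsum, rampSeries_apply_zero _ _ _,
    tendsto_atTop.2 fun N => ?_, fun ν hν => ?_⟩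
  · filter_upwards [(Finset.range ⌈N⌉₊).eventually_all.2
      fun n _ => eventually_ge_atTop (t n + 1)] with s hs
    calc N ≤ ⌈N⌉₊ := Nat.le_ceil N
      _ = ∑ n ∈ Finset.range ⌈N⌉₊, (1 : ℕ → ℝ≥0) n * ramp (t n) (t n + 1) s := by
          rw [Finset.sum_congr rfl fun n hn => by
            rw [Pi.one_apply, one_mul, ramp_eq_one_of_le (lt_add_one _) (hs n hn)]]
          simp
      _ ≤ rampSeries 1 t (t · + 1) s := (hsum s).sum_le_tsum _ fun _ _ => zero_le
  · calc ∫⁻ s, (rampSeries 1 t (t · + 1) s : ℝ≥0∞) ∂ν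
          ≤ ∑' n, ((1 : ℕ → ℝ≥0) n : ℝ≥0∞) * ν (Ioi (t n)) := lintegral_rampSeries_le hsum ν
      _ ≤ ∑' n : ℕ, 2⁻¹ ^ n := ENNReal.tsum_le_tsum fun n => by
          simpa using (le_biSup (fun ν => ν (Ioi (t n))) hν).trans (ht_le n)
      _ = 2 := by rw [ENNReal.tsum_geometric, ENNReal.one_sub_inv_two, inv_inv]

end

/-- Let `K` be a tight set of (possibly nonfinite) Borel measures on `[0,∞)`.
Then there exists a strictly increasing `ψ : [0,∞) → [0,∞)` with `ψ(0)=0`, `ψ(s) → ∞` and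
`sup_{ν∈K} ∫ ψ dν < ∞` if and only if `sup_{ν∈K} ν((s,∞)) < ∞` for all `s > 0`. -/
theorem stmt_2 (K : Set (Measure ℝ≥0))
    (htight : Tendsto (fun s : ℝ≥0 => ⨆ ν ∈ K, ν (Ioi s)) atTop (𝓝 0)) :
    (∃ ψ : ℝ≥0 → ℝ≥0, StrictMono ψ ∧ ψ 0 = 0 ∧ Tendsto ψ atTop atTop ∧
        (⨆ ν ∈ K, ∫⁻ s, (ψ s : ℝ≥0∞) ∂ν) < ⊤) ↔
      (∀ s : ℝ≥0, 0 < s → (⨆ ν ∈ K, ν (Ioi s)) < ⊤) := by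
  constructor
  · rintro ⟨ψ, hψ, hψ0, -, hK⟩ s hs
    exact biSup_measure_Ioi_lt_top hψ.monotone (hψ0 ▸ hψ hs).ne' hK
  · intro hK
    obtain ⟨φ, hφ, hφ0, hφK⟩ := exists_strictMono_lintegral_le_one K hK
    obtain ⟨χ, hχ, hχ0, hχ_top, hχK⟩ := exists_tendsto_atTop_lintegral_le_two K htight
    refine ⟨φ + χ, hφ.add_monotone hχ, by simp [hφ0, hχ0],
      tendsto_atTop_mono (fun s => le_add_self) hχ_top, ?_⟩
    calc ⨆ ν ∈ K, ∫⁻ s, ((φ + χ) s : ℝ≥0∞) ∂ν ≤ 1 + 2 := iSup₂_le fun ν hν => by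
          simp only [Pi.add_apply, ENNReal.coe_add]
          rw [lintegral_add_left hφ.monotone.measurable.coe_nnreal_ennreal]
          exact add_le_add (hφK ν hν) (hχK ν hν)
      _ < ⊤ := by norm_num
end

section
/- Let K be a set of (possibly nonfinite) Borel measures on [0,∞). Then the identity [0,∞) → [0,∞), s ↦ s, is uniformly integrable for K if and only if there exists a nondecreasing function ψ : [0,∞) → [0,∞) with ψ(0) = 0 such that the map s ↦ ψ(s)/s is nondecreasing on (0,∞), ψ(s)/s → ∞ as s → ∞, and sup_{ν∈K} ∫₀^∞ ψ(s) dν(s) < ∞. -/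
open MeasureTheory Filter Set Topology NNReal ENNReal

/-!
If the tails are uniformly small, pick thresholds `M n ≥ n` beyond which every tail integral is
at most `2⁻ⁿ`, and let `φ s` count the thresholds below `s`. Then `ψ s = s φ(s)` is superlinear
and `∫ ψ dν = ∑ₙ ∫_{(M n,∞)} s dν ≤ 2` for every `ν ∈ K`.
Conversely, if `ψ(s)/s` is nondecreasing then `ψ(M)/M · ∫_{(M,∞)} s dν ≤ ∫ ψ dν`, so the tails are
bounded by `sup_K ∫ ψ dν · M/ψ(M) → 0`.
-/

theorem exists_seq_tail_le_two_inv_pow {T : ℝ≥0 → ℝ≥0∞} (hT : Tendsto T atTop (𝓝 0)) :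
    ∃ M : ℕ → ℝ≥0, (∀ n : ℕ, (n : ℝ≥0) ≤ M n) ∧ ∀ n, T (M n) ≤ 2⁻¹ ^ n := by
  have h (n : ℕ) : ∃ a : ℝ≥0, (n : ℝ≥0) ≤ a ∧ T a ≤ 2⁻¹ ^ n :=
    ((eventually_ge_atTop _).and
      (hT.eventually (ge_mem_nhds (ENNReal.pow_pos (by simp) n)))).exists
  choose M hM using h
  exact ⟨M, fun n => (hM n).1, fun n => (hM n).2⟩

/-- The indices `n` with `M n < s`; the cut at `⌈s⌉₊` makes it finite as soon as `n ≤ M n`. -/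
noncomputable def tailIndices (M : ℕ → ℝ≥0) (s : ℝ≥0) : Finset ℕ :=
  (Finset.range ⌈s⌉₊).filter (M · < s)

noncomputable def tailCount (M : ℕ → ℝ≥0) (s : ℝ≥0) : ℕ := (tailIndices M s).card

section tailCount

variable {M : ℕ → ℝ≥0}

theorem mem_tailIndices (hM : ∀ n : ℕ, (n : ℝ≥0) ≤ M n) {s : ℝ≥0} {n : ℕ} :
    n ∈ tailIndices M s ↔ M n < s := by
  simp only [tailIndices, Finset.mem_filter, Finset.mem_range, and_iff_right_iff_imp]
  exact fun h => Nat.lt_ceil.mpr ((hM n).trans_lt h)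

theorem tailIndices_mono : Monotone (tailIndices M) := fun s t hst n hn => by
  simp only [tailIndices, Finset.mem_filter, Finset.mem_range] at hn ⊢
  exact ⟨hn.1.trans_le (Nat.ceil_mono hst), hn.2.trans_le hst⟩

theorem tailCount_mono : Monotone (tailCount M) := fun _ _ hst =>
  Finset.card_le_card (tailIndices_mono hst)

theorem tailCount_zero : tailCount M 0 = 0 := by
  simp [tailCount, tailIndices]

theorem tendsto_tailCount (hM : ∀ n : ℕ, (n : ℝ≥0) ≤ M n) : Tendsto (tailCount M) atTop atTop := by
  refine tendsto_atTop.mpr fun N => ?_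
  filter_upwards [(eventually_all_finset (Finset.range N)).mpr fun n _ =>
    eventually_gt_atTop (M n)] with s hs
  simpa [tailCount] using Finset.card_le_card fun n hn => (mem_tailIndices hM).mpr (hs n hn)

theorem mul_tailCount_div (s : ℝ≥0) : s * tailCount M s / s = tailCount M s := by
  rcases eq_or_ne s 0 with rfl | hs
  · simp [tailCount_zero]
  · exact mul_div_cancel_left₀ _ hs

theorem coe_mul_tailCount_eq_tsum (hM : ∀ n : ℕ, (n : ℝ≥0) ≤ M n) (s : ℝ≥0) :
    ((s * tailCount M s : ℝ≥0) : ℝ≥0∞) = ∑' n, (Ioi (M n)).indicator (↑) s := by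
  have hsupp : ∀ n ∉ tailIndices M s, (Ioi (M n)).indicator (fun u : ℝ≥0 => (u : ℝ≥0∞)) s = 0 :=
    fun n hn => indicator_of_notMem (s := Ioi (M n)) (fun h => hn ((mem_tailIndices hM).mpr h)) _
  have hmem : ∀ n ∈ tailIndices M s, (Ioi (M n)).indicator (fun u : ℝ≥0 => (u : ℝ≥0∞)) s = s :=
    fun n hn => indicator_of_mem (s := Ioi (M n)) ((mem_tailIndices hM).mp hn) _
  rw [tsum_eq_sum hsupp, Finset.sum_congr rfl hmem, Finset.sum_const, nsmul_eq_mul, mul_comm,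
    tailCount, coe_mul, coe_natCast]

theorem lintegral_mul_tailCount (hM : ∀ n : ℕ, (n : ℝ≥0) ≤ M n) (ν : Measure ℝ≥0) :
    ∫⁻ s, ((s * tailCount M s : ℝ≥0) : ℝ≥0∞) ∂ν = ∑' n, ∫⁻ s in Ioi (M n), (s : ℝ≥0∞) ∂ν := by
  simp_rw [coe_mul_tailCount_eq_tsum hM]
  rw [lintegral_tsum fun n =>
    (measurable_coe_nnreal_ennreal.indicator measurableSet_Ioi).aemeasurable]
  simp_rw [lintegral_indicator measurableSet_Ioi]

end tailCount

theorem div_mul_le_of_monotoneOn_div {ψ : ℝ≥0 → ℝ≥0} (hψ : MonotoneOn (fun s => ψ s / s) (Ioi 0))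
    {M s : ℝ≥0} (hMs : M < s) : ψ M / M * s ≤ ψ s := by
  rcases eq_or_ne M 0 with rfl | hM
  · simp
  have hs : 0 < s := (pos_of_ne_zero hM).trans hMs
  exact (le_div_iff₀ hs).mp (hψ (pos_of_ne_zero hM) hs hMs.le)

theorem div_mul_setLIntegral_Ioi_le {ψ : ℝ≥0 → ℝ≥0} (hψ : MonotoneOn (fun s => ψ s / s) (Ioi 0))
    (ν : Measure ℝ≥0) (M : ℝ≥0) :
    ((ψ M / M : ℝ≥0) : ℝ≥0∞) * ∫⁻ s in Ioi M, (s : ℝ≥0∞) ∂ν ≤ ∫⁻ s, (ψ s : ℝ≥0∞) ∂ν := by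
  rw [← lintegral_const_mul' _ _ coe_ne_top, ← lintegral_indicator measurableSet_Ioi]
  refine lintegral_mono fun s => indicator_apply_le' (fun hs => ?_) fun _ => zero_le
  rw [← coe_mul]
  exact coe_le_coe.mpr (div_mul_le_of_monotoneOn_div hψ hs)

theorem div_mul_iSup_setLIntegral_Ioi_le {ψ : ℝ≥0 → ℝ≥0}
    (hψ : MonotoneOn (fun s => ψ s / s) (Ioi 0)) (K : Set (Measure ℝ≥0)) (M : ℝ≥0) :
    ((ψ M / M : ℝ≥0) : ℝ≥0∞) * ⨆ ν ∈ K, ∫⁻ s in Ioi M, (s : ℝ≥0∞) ∂ν ≤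
      ⨆ ν ∈ K, ∫⁻ s, (ψ s : ℝ≥0∞) ∂ν := by
  simp only [ENNReal.mul_iSup]
  exact iSup₂_mono fun ν _ => div_mul_setLIntegral_Ioi_le hψ ν M

theorem tendsto_nhds_zero_of_mul_le {α : Type*} {l : Filter α} {f g : α → ℝ≥0∞} {C : ℝ≥0∞}
    (hC : C ≠ ⊤) (hg : Tendsto g l (𝓝 ⊤)) (hfg : ∀ᶠ x in l, g x * f x ≤ C) :
    Tendsto f l (𝓝 0) := by
  have hlim : Tendsto (fun x => C / g x) l (𝓝 0) := by
    simpa using ENNReal.Tendsto.const_div hg (Or.inr hC)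
  refine tendsto_of_tendsto_of_tendsto_of_le_of_le' tendsto_const_nhds hlim
    (Eventually.of_forall fun _ => zero_le) ?_
  filter_upwards [hfg, hg.eventually_ne top_ne_zero] with x hx hg0
  exact (ENNReal.le_div_iff_mul_le (Or.inl hg0) (Or.inr hC)).mpr (mul_comm (g x) _ ▸ hx)

/-- **Statement 3.** For a set `K` of (possibly nonfinite) Borel measures on `[0,∞)`, the
identity `s ↦ s` is uniformly integrable for `K`, i.e.
`sup_{ν∈K} ∫_{(M,∞)} s dν(s) → 0` as `M → ∞`, if and only if there is a nondecreasing
`ψ : [0,∞) → [0,∞)` with `ψ(0)=0` such that `s ↦ ψ(s)/s` is nondecreasing on `(0,∞)`,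
`ψ(s)/s → ∞` as `s → ∞`, and `sup_{ν∈K} ∫ ψ dν < ∞`. -/
theorem stmt_3 (K : Set (Measure ℝ≥0)) :
    Tendsto (fun M : ℝ≥0 => ⨆ ν ∈ K, ∫⁻ s in Ioi M, (s : ℝ≥0∞) ∂ν) atTop (𝓝 0) ↔
      ∃ ψ : ℝ≥0 → ℝ≥0, Monotone ψ ∧ ψ 0 = 0 ∧
        MonotoneOn (fun s => ψ s / s) (Ioi 0) ∧
        Tendsto (fun s => ψ s / s) atTop atTop ∧
        (⨆ ν ∈ K, ∫⁻ s, (ψ s : ℝ≥0∞) ∂ν) < ⊤ := by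
  constructor
  · intro h
    obtain ⟨M, hM, hMtail⟩ := exists_seq_tail_le_two_inv_pow h
    have hdiv : (fun s => s * tailCount M s / s) = fun s => (tailCount M s : ℝ≥0) :=
      funext mul_tailCount_div
    refine ⟨fun s => s * tailCount M s, monotone_id.mul' (Nat.mono_cast.comp tailCount_mono),
      by simp, ?_, ?_, ?_⟩
    · exact hdiv ▸ (Nat.mono_cast.comp tailCount_mono).monotoneOn _
    · exact hdiv ▸ tendsto_natCast_atTop_atTop.comp (tendsto_tailCount hM)
    · calc (⨆ ν ∈ K, ∫⁻ s, ((s * tailCount M s : ℝ≥0) : ℝ≥0∞) ∂ν)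
          ≤ ∑' n : ℕ, (2⁻¹ : ℝ≥0∞) ^ n := iSup₂_le fun ν hν => by
            rw [lintegral_mul_tailCount hM]
            exact ENNReal.tsum_le_tsum fun n =>
              (le_biSup (fun ν => ∫⁻ s in Ioi (M n), (s : ℝ≥0∞) ∂ν) hν).trans (hMtail n)
        _ < ⊤ := by simp [ENNReal.tsum_geometric]
  · rintro ⟨ψ, -, -, hψ, hψ_top, hK⟩
    exact tendsto_nhds_zero_of_mul_le hK.ne (ENNReal.tendsto_coe_nhds_top.mpr hψ_top)
      (Eventually.of_forall (div_mul_iSup_setLIntegral_Ioi_le hψ K))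
end

section
/- Let H be a uniformly integrable set of real-valued random variables on a probability space (Ω, 𝓕, ℙ). Then there exists a continuously differentiable, strictly convex, nondecreasing function ψ : [0,∞) → [0,∞) with ψ(0) = 0 and ψ(s)/s → ∞ as s → ∞, such that sup_{X∈H} ∫_Ω ψ(|X|) dℙ < ∞ and the family {ψ(|X|) : X ∈ H} is again uniformly integrable, i.e. sup_{X∈H} ∫_{{ψ(|X|) > s}} ψ(|X|) dℙ → 0 as s → ∞. -/
open MeasureTheory Filter Set Topology NNReal ENNReal

/-!
Choose levels `c n → ∞` with `sup_{X ∈ H} ∫_{|X| > c n} |X| ≤ 4⁻ⁿ` and put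
`ψ s = (√(1 + s²) - 1) + ∑ₙ h (s - c n)`, where `h t = √(1 + max t 0 ²) - 1` is a `C¹` convex
hinge with `t - 1 ≤ h t ≤ max t 0`. Only finitely many hinges are nonzero below any given level,
so `ψ` is `C¹` and strictly convex, and `ψ s ≥ N s - O(1)` for every `N`. Since
`h (|X| - c n) ≤ |X| 1_{|X| > c n}`, on `{|X| > c N}` the `n`-th hinge integrates to at most
`min (4⁻ᴺ) (4⁻ⁿ) ≤ 2⁻ᴺ 2⁻ⁿ`, hence `∫_{|X| > c N} ψ |X| ≤ 3 · 2⁻ᴺ` uniformly over `H`. As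
`ψ` is monotone, `{ψ |X| > s} ⊆ {|X| > c N}` once `s ≥ ψ (c N)`; this gives the uniform
integrability of `ψ |X|` and, at the level `ψ (c 0)`, the bound on `∫ ψ |X|`.
-/

noncomputable def pseudoHuber (t : ℝ) : ℝ := √(1 + t ^ 2) - 1

lemma hasDerivAt_pseudoHuber (t : ℝ) : HasDerivAt pseudoHuber (t / √(1 + t ^ 2)) t := by
  have h := (((hasDerivAt_pow 2 t).const_add 1).sqrt (by positivity)).sub_const 1
  refine h.congr_deriv ?_
  field_simp
  norm_num

lemma contDiff_pseudoHuber : ContDiff ℝ 1 pseudoHuber :=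
  ((contDiff_const.add (contDiff_id.pow 2)).sqrt fun t => by positivity).sub contDiff_const

lemma pseudoHuber_nonneg (t : ℝ) : 0 ≤ pseudoHuber t := by
  have : 1 ≤ √(1 + t ^ 2) := Real.one_le_sqrt.2 (by nlinarith [sq_nonneg t])
  unfold pseudoHuber; linarith

@[simp] lemma pseudoHuber_zero : pseudoHuber 0 = 0 := by simp [pseudoHuber]

lemma pseudoHuber_le {t : ℝ} (ht : 0 ≤ t) : pseudoHuber t ≤ t := by
  have : √(1 + t ^ 2) ≤ 1 + t := Real.sqrt_le_iff.2 ⟨by linarith, by nlinarith⟩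
  unfold pseudoHuber; linarith

lemma sub_one_le_pseudoHuber (t : ℝ) : t - 1 ≤ pseudoHuber t := by
  have : t ≤ √(1 + t ^ 2) := Real.le_sqrt_of_sq_le (by linarith)
  unfold pseudoHuber; linarith

lemma monotoneOn_pseudoHuber : MonotoneOn pseudoHuber (Ici 0) := by
  intro s hs t ht hst
  have : √(1 + s ^ 2) ≤ √(1 + t ^ 2) := by gcongr
  unfold pseudoHuber; linarith

lemma strictConvexOn_pseudoHuber : StrictConvexOn ℝ (Ici 0) pseudoHuber := by
  refine StrictMonoOn.strictConvexOn_of_deriv (convex_Ici 0)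
    contDiff_pseudoHuber.continuous.continuousOn ?_
  rw [interior_Ici, funext fun t => (hasDerivAt_pseudoHuber t).deriv]
  intro u hu v hv huv
  simp only [mem_Ioi] at hu hv
  have ha := Real.sqrt_pos.2 (by positivity : (0:ℝ) < 1 + u ^ 2)
  have hb := Real.sqrt_pos.2 (by positivity : (0:ℝ) < 1 + v ^ 2)
  rw [div_lt_div_iff₀ ha hb]
  refine lt_of_pow_lt_pow_left₀ 2 (by positivity) ?_
  rw [mul_pow, mul_pow, Real.sq_sqrt (by positivity), Real.sq_sqrt (by positivity)]
  nlinarith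

lemma HasDerivAt.comp_max_zero {g g' : ℝ → ℝ} (hg : ∀ x, HasDerivAt g (g' x) x) (hg' : g' 0 = 0)
    (t : ℝ) : HasDerivAt (fun s => g (max s 0)) (g' (max t 0)) t := by
  rcases lt_trichotomy t 0 with ht | rfl | ht
  · rw [max_eq_right ht.le, hg']
    refine (hasDerivAt_const t (g 0)).congr_of_eventuallyEq ?_
    filter_upwards [eventually_lt_nhds ht] with s hs
    rw [max_eq_right hs.le]
  · rw [max_self, ← hasDerivWithinAt_univ, ← Iic_union_Ici]
    refine HasDerivWithinAt.union ?_ ?_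
    · rw [hg']
      exact (hasDerivAt_const 0 (g 0)).hasDerivWithinAt.congr
        (fun s hs => by rw [max_eq_right hs]) (by rw [max_self])
    · exact (hg 0).hasDerivWithinAt.congr (fun s hs => by rw [max_eq_left hs]) (by rw [max_self])
  · rw [max_eq_left ht.le]
    refine (hg t).congr_of_eventuallyEq ?_
    filter_upwards [eventually_gt_nhds ht] with s hs
    rw [max_eq_left hs.le]

noncomputable def smoothHinge (t : ℝ) : ℝ := pseudoHuber (max t 0)

lemma contDiff_smoothHinge : ContDiff ℝ 1 smoothHinge := by
  have hd (t : ℝ) := HasDerivAt.comp_max_zero hasDerivAt_pseudoHuber (by simp) t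
  rw [contDiff_one_iff_deriv]
  refine ⟨fun t => (hd t).differentiableAt, ?_⟩
  rw [show deriv smoothHinge = _ from funext fun t => (hd t).deriv]
  exact (continuous_id.div (by fun_prop)
    fun t : ℝ => (Real.sqrt_pos.2 (by positivity : 0 < 1 + t ^ 2)).ne').comp
    (continuous_id.max continuous_const)

lemma convexOn_smoothHinge : ConvexOn ℝ univ smoothHinge := by
  have hmax : ConvexOn ℝ univ fun t : ℝ => max t 0 :=
    (convexOn_id convex_univ).sup (convexOn_const 0 convex_univ)
  have himage : (fun t : ℝ => max t 0) '' univ = Ici 0 := by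
    ext x
    refine ⟨?_, fun hx => ⟨x, mem_univ x, max_eq_left hx⟩⟩
    rintro ⟨t, -, rfl⟩
    exact le_max_right t 0
  exact ConvexOn.comp (himage ▸ strictConvexOn_pseudoHuber.convexOn) hmax
    (himage ▸ monotoneOn_pseudoHuber)

lemma smoothHinge_nonneg (t : ℝ) : 0 ≤ smoothHinge t := pseudoHuber_nonneg _

lemma smoothHinge_of_nonpos {t : ℝ} (ht : t ≤ 0) : smoothHinge t = 0 := by
  simp [smoothHinge, max_eq_right ht]

lemma smoothHinge_le_max (t : ℝ) : smoothHinge t ≤ max t 0 := pseudoHuber_le (le_max_right t 0)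

lemma sub_one_le_smoothHinge (t : ℝ) : t - 1 ≤ smoothHinge t :=
  (sub_le_sub_right (le_max_left t 0) 1).trans (sub_one_le_pseudoHuber _)

lemma monotone_smoothHinge : Monotone smoothHinge := fun s t h =>
  monotoneOn_pseudoHuber (mem_Ici.2 (le_max_right s 0)) (mem_Ici.2 (le_max_right t 0))
    (max_le_max_right 0 h)

lemma ConvexOn.tsum {E ι : Type*} [AddCommGroup E] [Module ℝ E] {s : Set E} {f : ι → E → ℝ}
    (hs : Convex ℝ s) (hf : ∀ i, ConvexOn ℝ s (f i)) (hsum : ∀ x ∈ s, Summable fun i => f i x) :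
    ConvexOn ℝ s fun x => ∑' i, f i x := by
  refine ⟨hs, fun x hx y hy a b ha hb hab => ?_⟩
  have hsum' : Summable fun i => a • f i x + b • f i y :=
    ((hsum x hx).const_smul a).add ((hsum y hy).const_smul b)
  calc ∑' i, f i (a • x + b • y) ≤ ∑' i, (a • f i x + b • f i y) :=
        Summable.tsum_le_tsum (fun i => (hf i).2 hx hy ha hb hab) (hsum _ (hs hx hy ha hb hab))
          hsum'
    _ = a • ∑' i, f i x + b • ∑' i, f i y := by
        rw [Summable.tsum_add ((hsum x hx).const_smul a) ((hsum y hy).const_smul b),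
          Summable.tsum_const_smul a (hsum x hx), Summable.tsum_const_smul b (hsum y hy)]

noncomputable def vallePoussin (c : ℕ → ℝ) (s : ℝ) : ℝ :=
  pseudoHuber s + ∑' n, smoothHinge (s - c n)

section vallePoussin

variable {c : ℕ → ℝ}

lemma exists_smoothHinge_sub_eq_zero (hc : Tendsto c atTop atTop) (x : ℝ) :
    ∃ N, ∀ n ≥ N, ∀ s ≤ x, smoothHinge (s - c n) = 0 :=
  (hc.eventually_ge_atTop x).exists_forall_of_atTop.imp fun _ hN n hn _ hs =>
    smoothHinge_of_nonpos (by linarith [hN n hn])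

lemma summable_smoothHinge_sub (hc : Tendsto c atTop atTop) (s : ℝ) :
    Summable fun n => smoothHinge (s - c n) := by
  obtain ⟨N, hN⟩ := exists_smoothHinge_sub_eq_zero hc s
  exact summable_of_ne_finset_zero (s := Finset.range N) fun n hn =>
    hN n (by simpa using hn) s le_rfl

lemma exists_vallePoussin_eq_sum (hc : Tendsto c atTop atTop) (x : ℝ) :
    ∃ N, ∀ s ≤ x,
      vallePoussin c s = pseudoHuber s + ∑ n ∈ Finset.range N, smoothHinge (s - c n) := by
  obtain ⟨N, hN⟩ := exists_smoothHinge_sub_eq_zero hc x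
  refine ⟨N, fun s hs => ?_⟩
  rw [vallePoussin, tsum_eq_sum (s := Finset.range N) fun n hn => hN n (by simpa using hn) s hs]

lemma contDiff_vallePoussin (hc : Tendsto c atTop atTop) : ContDiff ℝ 1 (vallePoussin c) := by
  refine contDiff_iff_contDiffAt.2 fun x => ?_
  obtain ⟨N, hN⟩ := exists_vallePoussin_eq_sum hc (x + 1)
  have hsum : ContDiff ℝ 1 fun s =>
      pseudoHuber s + ∑ n ∈ Finset.range N, smoothHinge (s - c n) :=
    contDiff_pseudoHuber.add
      (ContDiff.sum fun _ _ => contDiff_smoothHinge.comp (contDiff_id.sub contDiff_const))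
  refine hsum.contDiffAt.congr_of_eventuallyEq ?_
  filter_upwards [eventually_lt_nhds (lt_add_one x)] with s hs
  exact hN s hs.le

lemma strictConvexOn_vallePoussin (hc : Tendsto c atTop atTop) :
    StrictConvexOn ℝ (Ici 0) (vallePoussin c) :=
  strictConvexOn_pseudoHuber.add_convexOn <|
    (ConvexOn.tsum convex_univ
      (fun n => convexOn_smoothHinge.comp_affineMap (AffineMap.id ℝ ℝ - AffineMap.const ℝ ℝ (c n)))
      fun s _ => summable_smoothHinge_sub hc s).subset (subset_univ _) (convex_Ici 0)

lemma monotoneOn_vallePoussin (hc : Tendsto c atTop atTop) :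
    MonotoneOn (vallePoussin c) (Ici 0) :=
  monotoneOn_pseudoHuber.add fun s _ t _ hst =>
    Summable.tsum_le_tsum (fun _ => monotone_smoothHinge (sub_le_sub_right hst _))
      (summable_smoothHinge_sub hc s) (summable_smoothHinge_sub hc t)

lemma vallePoussin_nonneg (s : ℝ) : 0 ≤ vallePoussin c s :=
  add_nonneg (pseudoHuber_nonneg s) (tsum_nonneg fun _ => smoothHinge_nonneg _)

lemma vallePoussin_zero (hc0 : ∀ n, 0 ≤ c n) : vallePoussin c 0 = 0 := by
  simp [vallePoussin, smoothHinge_of_nonpos, hc0]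

lemma sum_sub_le_vallePoussin (hc : Tendsto c atTop atTop) (N : ℕ) (s : ℝ) :
    N * s - ∑ n ∈ Finset.range N, (c n + 1) ≤ vallePoussin c s := by
  calc N * s - ∑ n ∈ Finset.range N, (c n + 1) = ∑ n ∈ Finset.range N, (s - c n - 1) := by
        simp only [Finset.sum_sub_distrib, Finset.sum_add_distrib, Finset.sum_const,
          Finset.card_range, nsmul_eq_mul]
        ring
    _ ≤ ∑ n ∈ Finset.range N, smoothHinge (s - c n) :=
        Finset.sum_le_sum fun n _ => sub_one_le_smoothHinge _
    _ ≤ ∑' n, smoothHinge (s - c n) :=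
        (summable_smoothHinge_sub hc s).sum_le_tsum _ fun n _ => smoothHinge_nonneg _
    _ ≤ vallePoussin c s := le_add_of_nonneg_left (pseudoHuber_nonneg s)

lemma tendsto_vallePoussin_div (hc : Tendsto c atTop atTop) :
    Tendsto (fun s => vallePoussin c s / s) atTop atTop := by
  refine tendsto_atTop.2 fun b => ?_
  set N := ⌈b⌉₊ + 1
  set K := ∑ n ∈ Finset.range N, (c n + 1)
  filter_upwards [eventually_ge_atTop (max 1 K)] with s hs
  have hs1 : 1 ≤ s := (le_max_left _ _).trans hs
  have hsK : K ≤ s := (le_max_right _ _).trans hs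
  have hbN : b + 1 ≤ N := by simp only [N]; push_cast; linarith [Nat.le_ceil b]
  rw [le_div_iff₀ (by linarith)]
  nlinarith [sum_sub_le_vallePoussin hc N s]

lemma setOf_lt_vallePoussin_subset {Ω : Type*} (hc : Tendsto c atTop atTop)
    {f : Ω → ℝ} (hf0 : 0 ≤ f) {a s : ℝ} (ha : 0 ≤ a) (hs : vallePoussin c a ≤ s) :
    {ω | s < vallePoussin c (f ω)} ⊆ {ω | a < f ω} := fun ω hω => by
  by_contra h
  exact absurd hω (not_lt.2 ((monotoneOn_vallePoussin hc (hf0 ω) ha (not_lt.1 h)).trans hs))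

end vallePoussin

section Integral

variable {Ω : Type*} [MeasurableSpace Ω] {μ : Measure Ω} {f : Ω → ℝ}

lemma lintegral_ofReal_le_add_setLIntegral (a : ℝ) :
    ∫⁻ ω, ENNReal.ofReal (f ω) ∂μ ≤
      ENNReal.ofReal a * μ univ + ∫⁻ ω in {ω | a < f ω}, ENNReal.ofReal (f ω) ∂μ := by
  have hpt (ω : Ω) : ENNReal.ofReal (f ω) ≤
      ENNReal.ofReal a + {ω | a < f ω}.indicator (fun ω => ENNReal.ofReal (f ω)) ω := by
    by_cases h : a < f ω
    · simp [indicator_of_mem (show ω ∈ {ω | a < f ω} from h)]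
    · simpa [indicator_of_notMem (show ω ∉ {ω | a < f ω} from h)] using
        ENNReal.ofReal_le_ofReal (not_lt.1 h)
  calc ∫⁻ ω, ENNReal.ofReal (f ω) ∂μ
      ≤ ∫⁻ ω, (ENNReal.ofReal a +
          {ω | a < f ω}.indicator (fun ω => ENNReal.ofReal (f ω)) ω) ∂μ :=
        lintegral_mono hpt
    _ ≤ ENNReal.ofReal a * μ univ + ∫⁻ ω in {ω | a < f ω}, ENNReal.ofReal (f ω) ∂μ := by
        rw [lintegral_add_left measurable_const, lintegral_const]
        exact add_le_add_right (lintegral_indicator_le _ _) _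

lemma lintegral_ofReal_smoothHinge_sub_le (hf0 : 0 ≤ f) {a : ℝ} (ha : 0 ≤ a) :
    ∫⁻ ω, ENNReal.ofReal (smoothHinge (f ω - a)) ∂μ ≤
      ∫⁻ ω in {ω | a < f ω}, ENNReal.ofReal (f ω) ∂μ := by
  refine le_trans (lintegral_mono fun ω => ?_) (lintegral_indicator_le _ _)
  by_cases h : a < f ω
  · rw [indicator_of_mem (show ω ∈ {ω | a < f ω} from h)]
    exact ENNReal.ofReal_le_ofReal ((smoothHinge_le_max _).trans (max_le (by linarith) (hf0 ω)))
  · simp [smoothHinge_of_nonpos (sub_nonpos.2 (not_lt.1 h))]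

lemma setLIntegral_restrict_le_min (g : Ω → ℝ≥0∞) (s t : Set Ω) :
    ∫⁻ ω in t, g ω ∂μ.restrict s ≤ min (∫⁻ ω in s, g ω ∂μ) (∫⁻ ω in t, g ω ∂μ) :=
  le_min (setLIntegral_le_lintegral _ _)
    (lintegral_mono' (Measure.restrict_mono subset_rfl Measure.restrict_le_self) le_rfl)

variable {c : ℕ → ℝ}

lemma lintegral_ofReal_vallePoussin_le (hc0 : ∀ n, 0 ≤ c n) (hc : Tendsto c atTop atTop)
    (hf : Measurable f) (hf0 : 0 ≤ f) :
    ∫⁻ ω, ENNReal.ofReal (vallePoussin c (f ω)) ∂μ ≤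
      ∫⁻ ω, ENNReal.ofReal (f ω) ∂μ +
        ∑' n, ∫⁻ ω in {ω | c n < f ω}, ENNReal.ofReal (f ω) ∂μ := by
  have hsplit (x : ℝ) : ENNReal.ofReal (vallePoussin c x) =
      ENNReal.ofReal (pseudoHuber x) + ∑' n, ENNReal.ofReal (smoothHinge (x - c n)) := by
    rw [vallePoussin, ENNReal.ofReal_add (pseudoHuber_nonneg x)
      (tsum_nonneg fun _ => smoothHinge_nonneg _),
      ENNReal.ofReal_tsum_of_nonneg (fun _ => smoothHinge_nonneg _) (summable_smoothHinge_sub hc x)]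
  have hmeasG : Measurable fun ω => ENNReal.ofReal (pseudoHuber (f ω)) :=
    ENNReal.measurable_ofReal.comp (contDiff_pseudoHuber.continuous.measurable.comp hf)
  have hmeas (n : ℕ) : Measurable fun ω => ENNReal.ofReal (smoothHinge (f ω - c n)) :=
    ENNReal.measurable_ofReal.comp
      (contDiff_smoothHinge.continuous.measurable.comp (hf.sub measurable_const))
  simp_rw [hsplit]
  rw [lintegral_add_left hmeasG, lintegral_tsum fun n => (hmeas n).aemeasurable]
  exact add_le_add (lintegral_mono fun ω => ENNReal.ofReal_le_ofReal (pseudoHuber_le (hf0 ω)))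
    (ENNReal.tsum_le_tsum fun n => lintegral_ofReal_smoothHinge_sub_le hf0 (hc0 n))

lemma min_mul_self_le_mul (x y : ℝ≥0∞) : min (x * x) (y * y) ≤ x * y := by
  rcases le_total x y with h | h
  · exact min_le_of_left_le (by gcongr)
  · exact min_le_of_right_le (by gcongr)

lemma setLIntegral_vallePoussin_le (hc0 : ∀ n, 0 ≤ c n) (hc : Tendsto c atTop atTop)
    (hf : Measurable f) (hf0 : 0 ≤ f)
    (htail : ∀ n, ∫⁻ ω in {ω | c n < f ω}, ENNReal.ofReal (f ω) ∂μ ≤ 2⁻¹ ^ n * 2⁻¹ ^ n)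
    (N : ℕ) :
    ∫⁻ ω in {ω | c N < f ω}, ENNReal.ofReal (vallePoussin c (f ω)) ∂μ ≤ 3 * 2⁻¹ ^ N := by
  have hmin (n : ℕ) :
      ∫⁻ ω in {ω | c n < f ω}, ENNReal.ofReal (f ω) ∂μ.restrict {ω | c N < f ω} ≤
        2⁻¹ ^ N * 2⁻¹ ^ n :=
    (setLIntegral_restrict_le_min _ _ _).trans
      ((min_le_min (htail N) (htail n)).trans (min_mul_self_le_mul _ _))
  calc ∫⁻ ω in {ω | c N < f ω}, ENNReal.ofReal (vallePoussin c (f ω)) ∂μ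
      ≤ ∫⁻ ω in {ω | c N < f ω}, ENNReal.ofReal (f ω) ∂μ + ∑' n, 2⁻¹ ^ N * 2⁻¹ ^ n :=
        (lintegral_ofReal_vallePoussin_le hc0 hc hf hf0).trans
          (add_le_add_right (ENNReal.tsum_le_tsum hmin) _)
    _ ≤ 2⁻¹ ^ N + 2⁻¹ ^ N * 2 := by
        rw [ENNReal.tsum_mul_left, ENNReal.tsum_geometric, ENNReal.one_sub_inv_two, inv_inv]
        gcongr
        exact (htail N).trans (mul_le_of_le_one_right' (pow_le_one₀ (by simp) (by simp)))
    _ = 3 * 2⁻¹ ^ N := by ring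

end Integral

lemma exists_tendsto_atTop_forall_le {ε : ℝ → ℝ≥0∞} (hε : Tendsto ε atTop (𝓝 0))
    {b : ℕ → ℝ≥0∞} (hb : ∀ n, 0 < b n) :
    ∃ c : ℕ → ℝ, (∀ n, 0 ≤ c n) ∧ Tendsto c atTop atTop ∧ ∀ n, ε (c n) ≤ b n := by
  have (n : ℕ) : ∃ s : ℝ, n ≤ s ∧ ε s ≤ b n :=
    ((eventually_ge_atTop (n : ℝ)).and (hε.eventually_le_const (hb n))).exists
  choose c hnc hc using this
  exact ⟨c, fun n => (Nat.cast_nonneg n).trans (hnc n),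
    tendsto_atTop_mono hnc tendsto_natCast_atTop_atTop, hc⟩

/-- **Statement 5.** For a uniformly integrable set `H` of real-valued random variables on a
probability space, there is a continuously differentiable, strictly convex, nondecreasing
`ψ : [0,∞) → [0,∞)` with `ψ(0)=0` and `ψ(s)/s → ∞`, such that
`sup_{X∈H} ∫ ψ(|X|) dℙ < ∞` and `{ψ(|X|) : X ∈ H}` is again uniformly integrable. -/
theorem stmt_5 {Ω : Type*} [MeasurableSpace Ω] (P : Measure Ω) [IsProbabilityMeasure P]
    (H : Set (Ω → ℝ)) (hmeas : ∀ X ∈ H, Measurable X)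
    (hui : Tendsto (fun s : ℝ => ⨆ X ∈ H, ∫⁻ ω in {ω | s < |X ω|}, ENNReal.ofReal |X ω| ∂P)
      atTop (𝓝 0)) :
    ∃ ψ : ℝ → ℝ, ContDiffOn ℝ 1 ψ (Ici 0) ∧ StrictConvexOn ℝ (Ici 0) ψ ∧
      MonotoneOn ψ (Ici 0) ∧ (∀ s ∈ Ici (0 : ℝ), 0 ≤ ψ s) ∧ ψ 0 = 0 ∧
      Tendsto (fun s => ψ s / s) atTop atTop ∧
      (⨆ X ∈ H, ∫⁻ ω, ENNReal.ofReal (ψ |X ω|) ∂P) < ⊤ ∧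
      Tendsto (fun s : ℝ => ⨆ X ∈ H, ∫⁻ ω in {ω | s < ψ |X ω|}, ENNReal.ofReal (ψ |X ω|) ∂P)
        atTop (𝓝 0) := by
  obtain ⟨c, hc0, hc, hcH⟩ := exists_tendsto_atTop_forall_le hui
    (b := fun n => 2⁻¹ ^ n * 2⁻¹ ^ n) fun n => by simp [ENNReal.pow_pos]
  set ψ := vallePoussin c
  have hlevel (X) (hX : X ∈ H) (N : ℕ) {s : ℝ} (hs : ψ (c N) ≤ s) :
      ∫⁻ ω in {ω | s < ψ |X ω|}, ENNReal.ofReal (ψ |X ω|) ∂P ≤ 3 * 2⁻¹ ^ N :=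
    have habs0 : 0 ≤ fun ω => |X ω| := fun ω => abs_nonneg (X ω)
    (lintegral_mono_set (setOf_lt_vallePoussin_subset hc habs0 (hc0 N) hs)).trans
      (setLIntegral_vallePoussin_le hc0 hc (hmeas X hX).abs habs0
        (fun n => (le_iSup₂ (f := fun X _ => ∫⁻ ω in {ω | c n < |X ω|}, ENNReal.ofReal |X ω| ∂P)
          X hX).trans (hcH n)) N)
  refine ⟨ψ, (contDiff_vallePoussin hc).contDiffOn, strictConvexOn_vallePoussin hc,
    monotoneOn_vallePoussin hc, fun s _ => vallePoussin_nonneg s, vallePoussin_zero hc0,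
    tendsto_vallePoussin_div hc, ?_, ?_⟩
  · refine (iSup₂_le fun X hX => ?_).trans_lt
      (by finiteness : ENNReal.ofReal (ψ (c 0)) + 3 * 2⁻¹ ^ 0 < ⊤)
    calc ∫⁻ ω, ENNReal.ofReal (ψ |X ω|) ∂P
        ≤ ENNReal.ofReal (ψ (c 0)) * P univ +
            ∫⁻ ω in {ω | ψ (c 0) < ψ |X ω|}, ENNReal.ofReal (ψ |X ω|) ∂P :=
          lintegral_ofReal_le_add_setLIntegral _
      _ ≤ ENNReal.ofReal (ψ (c 0)) + 3 * 2⁻¹ ^ 0 := by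
          rw [measure_univ, mul_one]
          exact add_le_add_right (hlevel X hX 0 le_rfl) _
  · have h3 : Tendsto (fun N : ℕ => 3 * (2⁻¹ : ℝ≥0∞) ^ N) atTop (𝓝 0) := by
      simpa using ENNReal.Tendsto.const_mul
        (ENNReal.tendsto_pow_atTop_nhds_zero_of_lt_one (by norm_num)) (Or.inr ofNat_ne_top)
    refine ENNReal.tendsto_nhds_zero.2 fun η hη => ?_
    obtain ⟨N, hN⟩ := (ENNReal.tendsto_nhds_zero.1 h3 η hη).exists
    filter_upwards [eventually_ge_atTop (ψ (c N))] with s hs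
    exact (iSup₂_le fun X hX => hlevel X hX N hs).trans hN
end

section
/- The lattice (P(ℝ), ≤st) is Dedekind super complete: every nonempty set K ⊆ P(ℝ) which is bounded above with respect to ≤st has a least upper bound in P(ℝ) and a countable subset K₀ ⊆ K with the same least upper bound; dually, every nonempty K bounded below with respect to ≤st has a greatest lower bound and a countable subset with the same greatest lower bound. -/
open MeasureTheory Filter Set Topology

/-- First order stochastic dominance on `P(ℝ)`. -/
def StOrd (μ ν : ProbabilityMeasure ℝ) : Prop :=
  ∀ s : ℝ, (μ : Measure ℝ) (Ioi s) ≤ (ν : Measure ℝ) (Ioi s)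

/-!
`μ ≤st ν` says exactly that the distribution function of `ν` lies below that of `μ`. For a
nonempty family bounded above, the pointwise infimum `f` of its distribution functions is
monotone and squeezed between two distribution functions, so its right-continuous regularisation
`x ↦ f (x+)` is the distribution function of a probability measure, which is the least upper bound.
A monotone function and a right-continuous one are compared through their values at rational
points, and at each rational point the infimum of reals is already attained along a sequence;
collecting these countably many sequences gives the countable subfamily. Greatest lower bounds are
obtained in the same way from the pointwise supremum.
-/

open ProbabilityTheory Function

section Order

variable {ι α : Type*} [TopologicalSpace α] [LinearOrder α] [OrderTopology α]
  [FirstCountableTopology α] {K : Set ι} {F : ι → α} {a : α}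

theorem IsGLB.exists_countable_subset_isGLB_image (h : IsGLB (F '' K) a) (hK : K.Nonempty) :
    ∃ S ⊆ K, S.Countable ∧ IsGLB (F '' S) a := by
  obtain ⟨u, -, hau, hu, hmem⟩ := h.exists_seq_antitone_tendsto (hK.image F)
  choose v hvK hv using hmem
  refine ⟨range v, range_subset_iff.2 hvK, countable_range v, ?_⟩
  rw [← range_comp, show F ∘ v = u from funext hv]
  exact ⟨forall_mem_range.2 hau, fun c hc ↦ ge_of_tendsto' hu (forall_mem_range.1 hc)⟩

theorem IsLUB.exists_countable_subset_isLUB_image (h : IsLUB (F '' K) a) (hK : K.Nonempty) :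
    ∃ S ⊆ K, S.Countable ∧ IsLUB (F '' S) a :=
  IsGLB.exists_countable_subset_isGLB_image (α := αᵒᵈ) h hK

end Order

section RightLim

variable {f g : ℝ → ℝ}

theorem Monotone.le_rightLim_of_forall_rat_le (hf : Monotone f) (hg : Monotone g)
    (h : ∀ q : ℚ, g q ≤ f q) (x : ℝ) : g x ≤ rightLim f x := by
  refine _root_.ge_of_tendsto (hf.tendsto_rightLim x) ?_
  filter_upwards [self_mem_nhdsWithin] with y (hy : x < y)
  obtain ⟨q, hxq, hqy⟩ := exists_rat_btwn hy
  exact (hg hxq.le).trans ((h q).trans (hf hqy.le))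

theorem Monotone.rightLim_le_of_forall_rat_le (hf : Monotone f) (G : StieltjesFunction ℝ)
    (h : ∀ q : ℚ, f q ≤ G q) (x : ℝ) : rightLim f x ≤ G x := by
  have hG : Tendsto G (𝓝[>] x) (𝓝 (G x)) :=
    (G.right_continuous x).mono_left (nhdsWithin_mono x Ioi_subset_Ici_self)
  refine _root_.ge_of_tendsto hG ?_
  filter_upwards [self_mem_nhdsWithin] with y (hy : x < y)
  obtain ⟨q, hxq, hqy⟩ := exists_rat_btwn hy
  exact (hf.rightLim_le hxq).trans ((h q).trans (G.mono hqy.le))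

end RightLim

theorem stOrd_iff_cdf_le (μ ν : ProbabilityMeasure ℝ) :
    StOrd μ ν ↔ ∀ s, cdf ν s ≤ cdf μ s := by
  refine forall_congr' fun s ↦ ?_
  have measure_Ioi (ρ : ProbabilityMeasure ℝ) :
      (ρ : Measure ℝ) (Ioi s) = 1 - ENNReal.ofReal (cdf ρ s) := by
    rw [ofReal_cdf, ← compl_Iic, prob_compl_eq_one_sub measurableSet_Iic]
  have cdf_le_one : ENNReal.ofReal (cdf ν s) ≤ 1 := by
    rw [ofReal_cdf]
    exact prob_le_one
  rw [measure_Ioi, measure_Ioi, ENNReal.sub_le_sub_iff_left cdf_le_one ENNReal.one_ne_top,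
    ENNReal.ofReal_le_ofReal_iff (cdf_nonneg _ _)]

theorem exists_cdf_eq_rightLim {f : ℝ → ℝ} (hf : Monotone f) (lo hi : ProbabilityMeasure ℝ)
    (hlo : ∀ x, cdf lo x ≤ f x) (hhi : ∀ x, f x ≤ cdf hi x) :
    ∃ σ : ProbabilityMeasure ℝ, ∀ x, cdf σ x = rightLim f x := by
  let F := hf.stieltjesFunction
  have hFlo x : cdf lo x ≤ F x := (hlo x).trans (hf.le_rightLim le_rfl)
  have hFhi x : F x ≤ cdf hi x := hf.rightLim_le_of_forall_rat_le _ (fun q ↦ hhi q) x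
  have h0 : Tendsto F atBot (𝓝 0) :=
    tendsto_of_tendsto_of_tendsto_of_le_of_le tendsto_const_nhds (tendsto_cdf_atBot _)
      (fun x ↦ (cdf_nonneg _ x).trans (hFlo x)) hFhi
  have h1 : Tendsto F atTop (𝓝 1) :=
    tendsto_of_tendsto_of_tendsto_of_le_of_le (tendsto_cdf_atTop _) tendsto_const_nhds hFlo
      (fun x ↦ (hFhi x).trans (cdf_le_one _ x))
  have hprob := F.isProbabilityMeasure h0 h1
  refine ⟨⟨F.measure, hprob⟩, fun x ↦ ?_⟩
  rw [ProbabilityMeasure.coe_mk, cdf_measure_stieltjesFunction F h0 h1]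
  rfl

def IsStLUB (K : Set (ProbabilityMeasure ℝ)) (σ : ProbabilityMeasure ℝ) : Prop :=
  (∀ μ ∈ K, StOrd μ σ) ∧ ∀ b, (∀ μ ∈ K, StOrd μ b) → StOrd σ b

def IsStGLB (K : Set (ProbabilityMeasure ℝ)) (τ : ProbabilityMeasure ℝ) : Prop :=
  (∀ μ ∈ K, StOrd τ μ) ∧ ∀ b, (∀ μ ∈ K, StOrd b μ) → StOrd b τ

section CdfBounds

variable {L : Set (ProbabilityMeasure ℝ)} {f : ℝ → ℝ}

theorem isStLUB_of_cdf_eq_rightLim (hf : Monotone f) {σ : ProbabilityMeasure ℝ}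
    (hσ : ∀ x, cdf σ x = rightLim f x)
    (hL : ∀ q : ℚ, IsGLB ((fun μ : ProbabilityMeasure ℝ ↦ cdf μ q) '' L) (f q)) :
    IsStLUB L σ := by
  refine ⟨fun μ hμ ↦ ?_, fun b hb ↦ ?_⟩
  · refine (stOrd_iff_cdf_le μ σ).2 fun x ↦ hσ x ▸ ?_
    exact hf.rightLim_le_of_forall_rat_le _ (fun q ↦ (hL q).1 ⟨μ, hμ, rfl⟩) x
  · refine (stOrd_iff_cdf_le σ b).2 fun x ↦ hσ x ▸ ?_
    refine hf.le_rightLim_of_forall_rat_le (monotone_cdf _) (fun q ↦ (hL q).2 ?_) x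
    rintro _ ⟨μ, hμ, rfl⟩
    exact (stOrd_iff_cdf_le μ b).1 (hb μ hμ) q

theorem isStGLB_of_cdf_eq_rightLim (hf : Monotone f) {τ : ProbabilityMeasure ℝ}
    (hτ : ∀ x, cdf τ x = rightLim f x)
    (hL : ∀ q : ℚ, IsLUB ((fun μ : ProbabilityMeasure ℝ ↦ cdf μ q) '' L) (f q)) :
    IsStGLB L τ := by
  refine ⟨fun μ hμ ↦ ?_, fun b hb ↦ ?_⟩
  · refine (stOrd_iff_cdf_le τ μ).2 fun x ↦ hτ x ▸ ?_
    exact hf.le_rightLim_of_forall_rat_le (monotone_cdf _) (fun q ↦ (hL q).1 ⟨μ, hμ, rfl⟩) x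
  · refine (stOrd_iff_cdf_le b τ).2 fun x ↦ hτ x ▸ ?_
    refine hf.rightLim_le_of_forall_rat_le _ (fun q ↦ (hL q).2 ?_) x
    rintro _ ⟨μ, hμ, rfl⟩
    exact (stOrd_iff_cdf_le b μ).1 (hb μ hμ) q

end CdfBounds

theorem exists_isStLUB_countable_subset (K : Set (ProbabilityMeasure ℝ)) (hK : K.Nonempty)
    (hbdd : ∃ b, ∀ μ ∈ K, StOrd μ b) :
    ∃ σ, IsStLUB K σ ∧ ∃ K₀ ⊆ K, K₀.Countable ∧ IsStLUB K₀ σ := by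
  obtain ⟨μ₀, hμ₀⟩ := hK
  obtain ⟨b, hb⟩ := hbdd
  let cdfAt (x : ℝ) (μ : ProbabilityMeasure ℝ) : ℝ := cdf μ x
  let f x := sInf (cdfAt x '' K)
  have hglb x : IsGLB (cdfAt x '' K) (f x) :=
    isGLB_csInf ⟨_, μ₀, hμ₀, rfl⟩ ⟨0, by rintro _ ⟨μ, -, rfl⟩; exact cdf_nonneg _ _⟩
  have hf : Monotone f := fun x y hxy ↦ (hglb y).2 <| by
    rintro _ ⟨μ, hμ, rfl⟩
    exact ((hglb x).1 ⟨μ, hμ, rfl⟩).trans (monotone_cdf _ hxy)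
  have hbf x : cdf b x ≤ f x := (hglb x).2 <| by
    rintro _ ⟨μ, hμ, rfl⟩
    exact (stOrd_iff_cdf_le μ b).1 (hb μ hμ) x
  obtain ⟨σ, hσ⟩ := exists_cdf_eq_rightLim hf b μ₀ hbf fun x ↦ (hglb x).1 ⟨μ₀, hμ₀, rfl⟩
  choose S hSK hSc hS using
    fun q : ℚ ↦ (hglb q).exists_countable_subset_isGLB_image ⟨μ₀, hμ₀⟩
  refine ⟨σ, isStLUB_of_cdf_eq_rightLim hf hσ fun q ↦ hglb q, ⋃ q, S q, iUnion_subset hSK,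
    countable_iUnion hSc, isStLUB_of_cdf_eq_rightLim hf hσ fun q ↦ ?_⟩
  exact (hS q).of_subset_of_superset (hglb q) (image_mono (subset_iUnion S q))
    (image_mono (iUnion_subset hSK))

theorem exists_isStGLB_countable_subset (K : Set (ProbabilityMeasure ℝ)) (hK : K.Nonempty)
    (hbdd : ∃ b, ∀ μ ∈ K, StOrd b μ) :
    ∃ τ, IsStGLB K τ ∧ ∃ K₀ ⊆ K, K₀.Countable ∧ IsStGLB K₀ τ := by
  obtain ⟨μ₀, hμ₀⟩ := hK
  obtain ⟨b, hb⟩ := hbdd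
  let cdfAt (x : ℝ) (μ : ProbabilityMeasure ℝ) : ℝ := cdf μ x
  let f x := sSup (cdfAt x '' K)
  have hlub x : IsLUB (cdfAt x '' K) (f x) :=
    isLUB_csSup ⟨_, μ₀, hμ₀, rfl⟩ ⟨1, by rintro _ ⟨μ, -, rfl⟩; exact cdf_le_one _ _⟩
  have hf : Monotone f := fun x y hxy ↦ (hlub x).2 <| by
    rintro _ ⟨μ, hμ, rfl⟩
    exact (monotone_cdf _ hxy).trans ((hlub y).1 ⟨μ, hμ, rfl⟩)
  have hfb x : f x ≤ cdf b x := (hlub x).2 <| by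
    rintro _ ⟨μ, hμ, rfl⟩
    exact (stOrd_iff_cdf_le b μ).1 (hb μ hμ) x
  obtain ⟨τ, hτ⟩ := exists_cdf_eq_rightLim hf μ₀ b (fun x ↦ (hlub x).1 ⟨μ₀, hμ₀, rfl⟩) hfb
  choose S hSK hSc hS using
    fun q : ℚ ↦ (hlub q).exists_countable_subset_isLUB_image ⟨μ₀, hμ₀⟩
  refine ⟨τ, isStGLB_of_cdf_eq_rightLim hf hτ fun q ↦ hlub q, ⋃ q, S q, iUnion_subset hSK,
    countable_iUnion hSc, isStGLB_of_cdf_eq_rightLim hf hτ fun q ↦ ?_⟩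
  exact (hS q).of_subset_of_superset (hlub q) (image_mono (subset_iUnion S q))
    (image_mono (iUnion_subset hSK))

/-- The lattice `(P(ℝ), ≤st)` is Dedekind super complete: every nonempty set
bounded above w.r.t. `≤st` has a least upper bound and a countable subset with the same least
upper bound, and dually for sets bounded below. -/
theorem stmt_8 :
    (∀ K : Set (ProbabilityMeasure ℝ), K.Nonempty → (∃ b, ∀ μ ∈ K, StOrd μ b) →
      ∃ σ : ProbabilityMeasure ℝ,
        (∀ μ ∈ K, StOrd μ σ) ∧ (∀ b, (∀ μ ∈ K, StOrd μ b) → StOrd σ b) ∧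
        ∃ K₀ ⊆ K, K₀.Countable ∧
          (∀ μ ∈ K₀, StOrd μ σ) ∧ (∀ b, (∀ μ ∈ K₀, StOrd μ b) → StOrd σ b)) ∧
    (∀ K : Set (ProbabilityMeasure ℝ), K.Nonempty → (∃ b, ∀ μ ∈ K, StOrd b μ) →
      ∃ τ : ProbabilityMeasure ℝ,
        (∀ μ ∈ K, StOrd τ μ) ∧ (∀ b, (∀ μ ∈ K, StOrd b μ) → StOrd b τ) ∧
        ∃ K₀ ⊆ K, K₀.Countable ∧
          (∀ μ ∈ K₀, StOrd τ μ) ∧ (∀ b, (∀ μ ∈ K₀, StOrd b μ) → StOrd b τ)) := by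
  refine ⟨fun K hK hbdd ↦ ?_, fun K hK hbdd ↦ ?_⟩
  · obtain ⟨σ, ⟨hub, hlub⟩, K₀, hK₀, hc, hub₀, hlub₀⟩ :=
      exists_isStLUB_countable_subset K hK hbdd
    exact ⟨σ, hub, hlub, K₀, hK₀, hc, hub₀, hlub₀⟩
  · obtain ⟨τ, ⟨hlb, hglb⟩, K₀, hK₀, hc, hlb₀, hglb₀⟩ :=
      exists_isStGLB_countable_subset K hK hbdd
    exact ⟨τ, hlb, hglb, K₀, hK₀, hc, hlb₀, hglb₀⟩
end

section
/- Let K ⊆ P(ℝ) be a nonempty set which is bounded above with respect to ≤st and directed upwards (for all μ, ν ∈ K there exists κ ∈ K with μ ≤st κ and ν ≤st κ). Then the least upper bound σ of K with respect to ≤st exists, and there is a sequence (μⁿ)_{n∈ℕ} ⊆ K with μⁿ ≤st μⁿ⁺¹ for all n such that μⁿ → σ weakly as n → ∞. -/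
/-!
The least upper bound is read off its survival function `G s = ⨆ μ ∈ K, μ (Ioi s)`.
As a supremum of antitone right-continuous functions, `G` is antitone and right-continuous, and
the nonemptiness and the upper bound of `K` force `G → 1` at `-∞` and `G → 0` at `+∞`; so `G`
is the survival function of a probability measure `σ`, which is then the least upper bound.
At each rational `q` the value `G q` is approached along a sequence in `K`; by directedness a
single `≤st`-chain in `K` dominates all these countably many measures, so the survival functions
of the chain increase to `G` at every rational, hence everywhere by right continuity. Their
convergence on the intervals `(a, b]`, a π-system of arbitrarily small neighbourhoods, gives
weak convergence.
-/

open MeasureTheory Filter Set Topology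

open scoped NNReal ENNReal

theorem DirectedOn.exists_chain_dominating_seq {α : Type*} {r : α → α → Prop} {K : Set α}
    (hK : DirectedOn r K) {x₀ : α} (hx₀ : x₀ ∈ K) {ν : ℕ → α} (hν : ∀ n, ν n ∈ K) :
    ∃ x : ℕ → α, (∀ n, x n ∈ K) ∧ (∀ n, r (x n) (x (n + 1))) ∧
      ∀ n, r (ν n) (x (n + 1)) := by
  have : Nonempty α := ⟨x₀⟩
  choose! up hupK hup_left hup_right using hK
  let x : ℕ → α := fun n => Nat.rec x₀ (fun k y => up y (ν k)) n
  have hxK : ∀ n, x n ∈ K := fun n => by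
    induction n with
    | zero => exact hx₀
    | succ k ih => exact hupK _ ih _ (hν k)
  exact ⟨x, hxK, fun n => hup_left _ (hxK n) _ (hν n),
    fun n => hup_right _ (hxK n) _ (hν n)⟩

theorem Set.Nonempty.exists_seq_iSup_eq_biSup {α β ι : Type*} [CompleteLinearOrder β]
    [TopologicalSpace β] [OrderTopology β] [FirstCountableTopology β] [Countable ι] {K : Set α}
    (hK : K.Nonempty) (φ : ι → α → β) :
    ∃ ν : ℕ → α, (∀ n, ν n ∈ K) ∧ ∀ i, ⨆ n, φ i (ν n) = ⨆ μ ∈ K, φ i μ := by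
  have hseq : ∀ i, ∃ w : ℕ → α, (∀ n, w n ∈ K) ∧
      ⨆ n, φ i (w n) = ⨆ μ ∈ K, φ i μ := by
    intro i
    obtain ⟨u, hu_mono, hu_lim, hu_mem⟩ :=
      exists_seq_tendsto_sSup (hK.image (φ i)) (OrderTop.bddAbove _)
    choose w hwK hw using hu_mem
    refine ⟨w, hwK, ?_⟩
    simp_rw [hw, ← sSup_image]
    exact iSup_eq_of_tendsto hu_mono hu_lim
  choose w hwK hw using hseq
  obtain ⟨ν, hν⟩ := ((countable_range (Function.uncurry w)).insert hK.some).exists_eq_range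
    (insert_nonempty _ _)
  have hνK : ∀ n, ν n ∈ K := by
    intro n
    obtain h | ⟨⟨i, k⟩, h⟩ := (hν ▸ mem_range_self n : ν n ∈ insert hK.some (range _))
    · exact h ▸ hK.some_mem
    · exact h ▸ hwK i k
  refine ⟨ν, hνK, fun i => le_antisymm (iSup_le fun n => le_biSup (φ i) (hνK n)) ?_⟩
  rw [← hw i]
  refine iSup_le fun k => ?_
  obtain ⟨n, hn⟩ : w i k ∈ range ν := hν ▸ mem_insert_of_mem _ ⟨(i, k), rfl⟩
  exact hn ▸ le_iSup (fun n => φ i (ν n)) n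

theorem iSup_measure_Ioi_gt {α : Type*} [LinearOrder α] [TopologicalSpace α] [OrderTopology α]
    [DenselyOrdered α] [NoMaxOrder α] [FirstCountableTopology α] [MeasurableSpace α]
    (μ : Measure α) (s : α) : ⨆ t ∈ Ioi s, μ (Ioi t) = μ (Ioi s) := by
  refine le_antisymm (iSup₂_le fun t ht => measure_mono (Ioi_subset_Ioi (le_of_lt ht))) ?_
  obtain ⟨u, hu_anti, hu_gt, hu_lim⟩ := exists_seq_strictAnti_tendsto s
  have hIoi : Ioi s = ⋃ n, Ioi (u n) := by
    refine Subset.antisymm (fun t ht => ?_) (iUnion_subset fun n => Ioi_subset_Ioi (hu_gt n).le)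
    obtain ⟨n, hn⟩ := (hu_lim.eventually (gt_mem_nhds ht)).exists
    exact mem_iUnion.mpr ⟨n, hn⟩
  calc μ (Ioi s) = ⨆ n, μ (Ioi (u n)) := by
        rw [hIoi, Monotone.measure_iUnion fun m n hmn => Ioi_subset_Ioi (hu_anti.antitone hmn)]
    _ ≤ ⨆ t ∈ Ioi s, μ (Ioi t) := iSup_le fun n => le_iSup₂_of_le (u n) (hu_gt n) le_rfl

theorem tendsto_measure_Ioi_atBot {α : Type*} [Preorder α] [NoMinOrder α]
    [(atBot : Filter α).IsCountablyGenerated] [MeasurableSpace α] (μ : Measure α) :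
    Tendsto (fun s => μ (Ioi s)) atBot (𝓝 (μ univ)) := by
  rw [← iUnion_Ioi]
  exact tendsto_measure_iUnion_atBot antitone_Ioi

theorem tendsto_measure_Ioi_atTop {α : Type*} [LinearOrder α] [TopologicalSpace α]
    [OrderClosedTopology α] [Nonempty α] [MeasurableSpace α] [OpensMeasurableSpace α]
    [(atTop : Filter α).IsCountablyGenerated] (μ : Measure α) [IsFiniteMeasure μ] :
    Tendsto (fun s => μ (Ioi s)) atTop (𝓝 0) := by
  have hempty : ⋂ s : α, Ioi s = ∅ :=
    eq_empty_of_forall_notMem fun x hx => lt_irrefl x (mem_iInter.mp hx x)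
  have := tendsto_measure_iInter_atTop (μ := μ) (fun s => measurableSet_Ioi.nullMeasurableSet)
    antitone_Ioi ⟨Classical.arbitrary α, measure_ne_top μ _⟩
  rwa [hempty, measure_empty] at this

section weakConvergence

variable {α ι : Type*} [LinearOrder α] [TopologicalSpace α] [OrderTopology α]
  [MeasurableSpace α] [OpensMeasurableSpace α] {l : Filter ι}
  {μ : ι → ProbabilityMeasure α} {ν : ProbabilityMeasure α}

theorem MeasureTheory.ProbabilityMeasure.tendsto_of_tendsto_measure_Ioc
    [DenselyOrdered α] [NoMinOrder α] [NoMaxOrder α] [SecondCountableTopology α]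
    [l.IsCountablyGenerated]
    (h : ∀ a b, a < b → Tendsto (fun i => μ i (Ioc a b)) l (𝓝 (ν (Ioc a b)))) :
    Tendsto μ l (𝓝 ν) := by
  refine (isPiSystem_Ioc id id).tendsto_probabilityMeasure_of_tendsto_of_mem ?_ ?_ ?_
  · rintro _ ⟨a, b, -, rfl⟩
    exact measurableSet_Ioc
  · intro u hu x hx
    obtain ⟨a, c, ⟨hax, hxc⟩, hsub⟩ := mem_nhds_iff_exists_Ioo_subset.mp (hu.mem_nhds hx)
    obtain ⟨b, hxb, hbc⟩ := exists_between hxc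
    exact ⟨Ioc a b, ⟨a, b, hax.trans hxb, rfl⟩, Ioc_mem_nhds hax hxb,
      (Ioc_subset_Ioo_right hbc).trans hsub⟩
  · rintro _ ⟨a, b, hab, rfl⟩
    exact h a b hab

theorem MeasureTheory.ProbabilityMeasure.tendsto_measure_Ioc_of_tendsto_measure_Ioi
    (h : ∀ s, Tendsto (fun i => (μ i : Measure α) (Ioi s)) l (𝓝 ((ν : Measure α) (Ioi s))))
    {a b : α} (hab : a < b) : Tendsto (fun i => μ i (Ioc a b)) l (𝓝 (ν (Ioc a b))) := by
  have hIoc : ∀ ρ : ProbabilityMeasure α,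
      ((ρ (Ioc a b) : ℝ≥0) : ℝ≥0∞) = (ρ : Measure α) (Ioi a) - (ρ : Measure α) (Ioi b) := by
    intro ρ
    rw [ProbabilityMeasure.ennreal_coeFn_eq_coeFn_toMeasure, ← Ioi_sdiff_Ioi,
      measure_sdiff (Ioi_subset_Ioi hab.le) measurableSet_Ioi.nullMeasurableSet
        (measure_ne_top _ _)]
  simp_rw [← ENNReal.tendsto_coe, hIoc]
  exact ENNReal.Tendsto.sub (h a) (h b) (Or.inl (measure_ne_top _ _))

end weakConvergence

theorem exists_probabilityMeasure_measure_Ioi_eq {G : ℝ → ℝ≥0∞} (hG : Antitone G)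
    (hright : ∀ s, ContinuousWithinAt G (Ioi s) s) (hbot : Tendsto G atBot (𝓝 1))
    (htop : Tendsto G atTop (𝓝 0)) :
    ∃ σ : ProbabilityMeasure ℝ, ∀ s, (σ : Measure ℝ) (Ioi s) = G s := by
  have hG_ne_top : ∀ s, G s ≠ ∞ := fun s =>
    ne_top_of_le_ne_top ENNReal.one_ne_top (hG.ge_of_tendsto hbot s)
  let F : StieltjesFunction ℝ :=
    { toFun := fun s => 1 - (G s).toReal
      mono' := fun s t hst => sub_le_sub_left (ENNReal.toReal_mono (hG_ne_top s) (hG hst)) 1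
      right_continuous' := fun s => continuousWithinAt_Ioi_iff_Ici.mp
        (((ENNReal.continuousAt_toReal (hG_ne_top s)).comp_continuousWithinAt
          (hright s)).const_sub 1) }
  have hF_bot : Tendsto F atBot (𝓝 0) := by
    simpa using ((ENNReal.tendsto_toReal ENNReal.one_ne_top).comp hbot).const_sub 1
  have hF_top : Tendsto F atTop (𝓝 1) := by
    simpa using ((ENNReal.tendsto_toReal ENNReal.zero_ne_top).comp htop).const_sub 1
  refine ⟨⟨F.measure, F.isProbabilityMeasure hF_bot hF_top⟩, fun s => ?_⟩
  change F.measure (Ioi s) = G s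
  rw [F.measure_Ioi hF_top, show F s = 1 - (G s).toReal from rfl, sub_sub_cancel,
    ENNReal.ofReal_toReal (hG_ne_top s)]

noncomputable def survivalSup (K : Set (ProbabilityMeasure ℝ)) (s : ℝ) : ℝ≥0∞ :=
  ⨆ μ ∈ K, (μ : Measure ℝ) (Ioi s)

section survivalSup

variable {K : Set (ProbabilityMeasure ℝ)}

theorem measure_Ioi_le_survivalSup {μ : ProbabilityMeasure ℝ} (hμ : μ ∈ K) (s : ℝ) :
    (μ : Measure ℝ) (Ioi s) ≤ survivalSup K s :=
  le_biSup (fun μ : ProbabilityMeasure ℝ => (μ : Measure ℝ) (Ioi s)) hμ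

theorem survivalSup_le_measure_Ioi {b : ProbabilityMeasure ℝ} (hb : ∀ μ ∈ K, StOrd μ b)
    (s : ℝ) : survivalSup K s ≤ (b : Measure ℝ) (Ioi s) :=
  iSup₂_le fun μ hμ => hb μ hμ s

theorem survivalSup_antitone : Antitone (survivalSup K) := fun s _ hst =>
  iSup₂_le fun _ hμ =>
    (measure_mono (Ioi_subset_Ioi hst)).trans (measure_Ioi_le_survivalSup hμ s)

theorem iSup_survivalSup_gt (s : ℝ) : ⨆ t ∈ Ioi s, survivalSup K t = survivalSup K s := by
  simp_rw [survivalSup, ← iSup_measure_Ioi_gt _ s]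
  exact iSup₂_comm _

theorem continuousWithinAt_survivalSup (s : ℝ) :
    ContinuousWithinAt (survivalSup K) (Ioi s) s := by
  have := (survivalSup_antitone (K := K)).tendsto_nhdsGT s
  rwa [sSup_image, iSup_survivalSup_gt] at this

theorem tendsto_survivalSup_atBot (hK : K.Nonempty) : Tendsto (survivalSup K) atBot (𝓝 1) :=
  tendsto_of_tendsto_of_tendsto_of_le_of_le
    (by simpa using tendsto_measure_Ioi_atBot (hK.some : Measure ℝ)) tendsto_const_nhds
    (measure_Ioi_le_survivalSup hK.some_mem) fun _ => iSup₂_le fun _ _ => prob_le_one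

theorem tendsto_survivalSup_atTop {b : ProbabilityMeasure ℝ} (hb : ∀ μ ∈ K, StOrd μ b) :
    Tendsto (survivalSup K) atTop (𝓝 0) :=
  tendsto_of_tendsto_of_tendsto_of_le_of_le tendsto_const_nhds
    (tendsto_measure_Ioi_atTop (b : Measure ℝ)) (fun _ => zero_le) (survivalSup_le_measure_Ioi hb)

theorem exists_chain_iSup_measure_Ioi_eq_survivalSup (hK : K.Nonempty)
    (hdir : DirectedOn StOrd K) :
    ∃ x : ℕ → ProbabilityMeasure ℝ, (∀ n, x n ∈ K) ∧ (∀ n, StOrd (x n) (x (n + 1))) ∧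
      ∀ s, ⨆ n, (x n : Measure ℝ) (Ioi s) = survivalSup K s := by
  obtain ⟨ν, hνK, hν⟩ := hK.exists_seq_iSup_eq_biSup fun (q : ℚ) μ => (μ : Measure ℝ) (Ioi q)
  obtain ⟨x, hxK, hx_chain, hνx⟩ := hdir.exists_chain_dominating_seq hK.some_mem hνK
  refine ⟨x, hxK, hx_chain, fun s => ?_⟩
  refine le_antisymm (iSup_le fun n => measure_Ioi_le_survivalSup (hxK n) s) ?_
  rw [← iSup_survivalSup_gt]
  refine iSup₂_le fun t (hst : s < t) => ?_
  obtain ⟨q, hsq, hqt⟩ := exists_rat_btwn hst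
  calc survivalSup K t ≤ survivalSup K q := survivalSup_antitone hqt.le
    _ = ⨆ n, (ν n : Measure ℝ) (Ioi q) := (hν q).symm
    _ ≤ ⨆ n, (x (n + 1) : Measure ℝ) (Ioi q) := iSup_mono fun n => hνx n q
    _ ≤ ⨆ n, (x n : Measure ℝ) (Ioi s) :=
      iSup_le fun n => le_iSup_of_le (n + 1) (measure_mono (Ioi_subset_Ioi hsq.le))

end survivalSup

/-- **Statement 9.** Let `K ⊆ P(ℝ)` be nonempty, bounded above w.r.t. `≤st` and directed
upwards. Then the least upper bound `σ` of `K` w.r.t. `≤st` exists and there is a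
`≤st`-nondecreasing sequence `(μⁿ) ⊆ K` converging weakly to `σ`. -/
theorem stmt_9 (K : Set (ProbabilityMeasure ℝ)) (hne : K.Nonempty)
    (hbdd : ∃ b, ∀ μ ∈ K, StOrd μ b)
    (hdir : ∀ μ ∈ K, ∀ ν ∈ K, ∃ κ ∈ K, StOrd μ κ ∧ StOrd ν κ) :
    ∃ σ : ProbabilityMeasure ℝ,
      (∀ μ ∈ K, StOrd μ σ) ∧ (∀ b, (∀ μ ∈ K, StOrd μ b) → StOrd σ b) ∧
      ∃ μseq : ℕ → ProbabilityMeasure ℝ, (∀ n, μseq n ∈ K) ∧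
        (∀ n, StOrd (μseq n) (μseq (n + 1))) ∧ Tendsto μseq atTop (𝓝 σ) := by
  obtain ⟨b, hb⟩ := hbdd
  obtain ⟨σ, hσ⟩ := exists_probabilityMeasure_measure_Ioi_eq survivalSup_antitone
    continuousWithinAt_survivalSup (tendsto_survivalSup_atBot hne) (tendsto_survivalSup_atTop hb)
  obtain ⟨x, hxK, hx_chain, hx_sup⟩ := exists_chain_iSup_measure_Ioi_eq_survivalSup hne hdir
  refine ⟨σ, fun μ hμ s => hσ s ▸ measure_Ioi_le_survivalSup hμ s,
    fun b' hb' s => hσ s ▸ survivalSup_le_measure_Ioi hb' s, x, hxK, hx_chain, ?_⟩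
  have hx_tendsto : ∀ s, Tendsto (fun n => (x n : Measure ℝ) (Ioi s)) atTop
      (𝓝 ((σ : Measure ℝ) (Ioi s))) := fun s => by
    rw [hσ, ← hx_sup]
    exact tendsto_atTop_iSup (monotone_nat_of_le_succ fun n => hx_chain n s)
  exact ProbabilityMeasure.tendsto_of_tendsto_measure_Ioc fun _ _ =>
    ProbabilityMeasure.tendsto_measure_Ioc_of_tendsto_measure_Ioi hx_tendsto
end

section
/- The lattice (P₁(ℝ), ≤icv) is Dedekind super complete: every nonempty set K ⊆ P₁(ℝ) which is bounded above with respect to ≤icv has a least upper bound in P₁(ℝ) and a countable subset K₀ ⊆ K with the same least upper bound; dually, every nonempty K bounded below with respect to ≤icv has a greatest lower bound and a countable subset with the same greatest lower bound. The same statements hold for the order ≤icx in place of ≤icv. -/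
/-!
A measure `μ ∈ P₁(ℝ)` is encoded by its integrated distribution function
`F_μ s = ∫ (s - x)⁺ dμ(x)`, and `μ ≤icv ν` means `F_ν ≤ F_μ` pointwise. The functions `F_μ` are
exactly the convex `G` with `G s → 0` as `s → -∞` and `G s - s` convergent as `s → ∞`: `μ` is the
Stieltjes measure of the right derivative of `G`, and Fubini turns `∫ (s - x)⁺ dμ` into
`∫_{-∞}^s G'`. These conditions survive pointwise suprema bounded by some `F_ν`, so a family that
is bounded below for `≤icv` has a greatest lower bound, realizing `sup F_μ`; a family bounded
above has a least upper bound, realizing the supremum of `F_b` over all its upper bounds `b`.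
Since every `F_μ` is `1`-Lipschitz, it suffices to compare them at rational points, where
countably many members of the family already reach the supremum (or infimum) up to any
rational error. The reflection `x ↦ -x` exchanges `≤icx` with the reverse of `≤icv`.
-/

open MeasureTheory Filter Set Topology

/-- `P₁(ℝ)`: Borel probability measures on `ℝ` with finite first moment. -/
def P1 : Type :=
  {μ : Measure ℝ // IsProbabilityMeasure μ ∧ Integrable (fun x : ℝ => x) μ}

/-- The integrated distribution function `s ↦ ∫ (s - x)⁺ dμ(x)`. -/
noncomputable def IntDF (μ : P1) (s : ℝ) : ℝ := ∫ x, max (s - x) 0 ∂μ.1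

/-- The integrated survival function `s ↦ ∫ (x - s)⁺ dμ(x)`. -/
noncomputable def IntSF (μ : P1) (s : ℝ) : ℝ := ∫ x, max (x - s) 0 ∂μ.1

/-- Second order stochastic dominance (increasing concave order):
`μ ≤icv ν` iff `∫ (s-x)⁺ dμ ≥ ∫ (s-x)⁺ dν` for all `s`. -/
def Icv (μ ν : P1) : Prop := ∀ s : ℝ, IntDF ν s ≤ IntDF μ s

/-- Increasing convex order: `μ ≤icx ν` iff `∫ (x-s)⁺ dμ ≤ ∫ (x-s)⁺ dν` for all `s`. -/
def Icx (μ ν : P1) : Prop := ∀ s : ℝ, IntSF μ s ≤ IntSF ν s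

/-- Dedekind super completeness of `P₁(ℝ)` with respect to a relation `r`. -/
def SuperComplete (r : P1 → P1 → Prop) : Prop :=
  (∀ K : Set P1, K.Nonempty → (∃ b, ∀ μ ∈ K, r μ b) →
    ∃ σ : P1, (∀ μ ∈ K, r μ σ) ∧ (∀ b, (∀ μ ∈ K, r μ b) → r σ b) ∧
      ∃ K₀ ⊆ K, K₀.Countable ∧
        (∀ μ ∈ K₀, r μ σ) ∧ (∀ b, (∀ μ ∈ K₀, r μ b) → r σ b)) ∧
  (∀ K : Set P1, K.Nonempty → (∃ b, ∀ μ ∈ K, r b μ) →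
    ∃ τ : P1, (∀ μ ∈ K, r τ μ) ∧ (∀ b, (∀ μ ∈ K, r b μ) → r b τ) ∧
      ∃ K₀ ⊆ K, K₀.Countable ∧
        (∀ μ ∈ K₀, r τ μ) ∧ (∀ b, (∀ μ ∈ K₀, r b μ) → r b τ))

open scoped ENNReal

lemma exists_countable_subset_forall_le_of_forall_le {ι X : Type*} [TopologicalSpace X]
    [TopologicalSpace.SeparableSpace X] (K : Set ι) (f : ι → X → ℝ)
    (hf : ∀ i ∈ K, Continuous (f i)) :
    ∃ K₀ ⊆ K, K₀.Countable ∧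
      ∀ g : X → ℝ, Continuous g → (∀ i ∈ K₀, f i ≤ g) → ∀ i ∈ K, f i ≤ g := by
  obtain ⟨D, hDc, hDd⟩ := TopologicalSpace.exists_countable_dense X
  -- for every `x ∈ D` and rational `q`, keep one `f i` exceeding `q` at `x`, if there is one
  have hwit : ∀ p : D × ℚ, ∃ S ⊆ K, S.Subsingleton ∧
      ∀ i ∈ K, (p.2 : ℝ) < f i p.1 → ∃ j ∈ S, (p.2 : ℝ) < f j p.1 := by
    rintro ⟨x, q⟩
    by_cases h : ∃ i ∈ K, (q : ℝ) < f i x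
    · obtain ⟨i, hi, hq⟩ := h
      exact ⟨{i}, singleton_subset_iff.2 hi, subsingleton_singleton, fun _ _ _ ↦ ⟨i, rfl, hq⟩⟩
    · simp only [not_exists, not_and, not_lt] at h
      exact ⟨∅, empty_subset _, subsingleton_empty, fun i hi hq ↦ absurd (h i hi) hq.not_ge⟩
  choose S hSK hS1 hS using hwit
  have := hDc.to_subtype
  refine ⟨⋃ p, S p, iUnion_subset hSK, countable_iUnion fun p ↦ (hS1 p).countable,
    fun g hg hle i hi ↦ ?_⟩
  have hD : ∀ x ∈ D, f i x ≤ g x := by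
    intro x hx
    by_contra! hlt
    obtain ⟨q, hgq, hqf⟩ := exists_rat_btwn hlt
    obtain ⟨j, hj, hjq⟩ := hS (⟨x, hx⟩, q) i hi hqf
    exact (hle j (mem_iUnion.2 ⟨_, hj⟩) x).not_gt (hgq.trans hjq)
  exact fun x ↦ le_on_closure hD (hf i hi).continuousOn hg.continuousOn
    (hDd.closure_eq ▸ mem_univ x)

lemma exists_countable_subset_forall_ge_of_forall_ge {ι X : Type*} [TopologicalSpace X]
    [TopologicalSpace.SeparableSpace X] (K : Set ι) (f : ι → X → ℝ)
    (hf : ∀ i ∈ K, Continuous (f i)) :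
    ∃ K₀ ⊆ K, K₀.Countable ∧
      ∀ g : X → ℝ, Continuous g → (∀ i ∈ K₀, g ≤ f i) → ∀ i ∈ K, g ≤ f i := by
  obtain ⟨K₀, hK₀, hc, h⟩ := exists_countable_subset_forall_le_of_forall_le K (fun i x ↦ -f i x)
    fun i hi ↦ (hf i hi).neg
  refine ⟨K₀, hK₀, hc, fun g hg hle i hi x ↦ ?_⟩
  simpa using h (-g) hg.neg (fun j hj y ↦ neg_le_neg (hle j hj y)) i hi x

lemma convexOn_ciSup {ι E : Type*} [Nonempty ι] [AddCommMonoid E] [Module ℝ E] {s : Set E}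
    {f : ι → E → ℝ} (hf : ∀ i, ConvexOn ℝ s (f i))
    (hbdd : ∀ x ∈ s, BddAbove (range fun i ↦ f i x)) : ConvexOn ℝ s fun x ↦ ⨆ i, f i x := by
  refine ⟨(hf (Classical.arbitrary ι)).1, fun x hx y hy a b ha hb hab ↦ ciSup_le fun i ↦ ?_⟩
  refine ((hf i).2 hx hy ha hb hab).trans (add_le_add ?_ ?_)
  · exact smul_le_smul_of_nonneg_left (le_ciSup (hbdd x hx) i) ha
  · exact smul_le_smul_of_nonneg_left (le_ciSup (hbdd y hy) i) hb

namespace ConvexOn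

variable {f : ℝ → ℝ}

lemma monotone_rightDeriv (hf : ConvexOn ℝ univ f) :
    Monotone fun x ↦ derivWithin f (Ioi x) x := by
  simpa using hf.monotoneOn_rightDeriv

lemma continuousWithinAt_rightDeriv (hf : ConvexOn ℝ univ f) (x : ℝ) :
    ContinuousWithinAt (fun x ↦ derivWithin f (Ioi x) x) (Ici x) x := by
  have hcont : Continuous f := by
    simpa [continuousOn_univ] using hf.continuousOn isOpen_univ
  rw [← continuousWithinAt_Ioi_iff_Ici, ContinuousWithinAt, tendsto_order]
  refine ⟨fun a ha ↦ eventually_nhdsWithin_of_forall fun w hw ↦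
    ha.trans_le (hf.monotone_rightDeriv hw.le), fun u hu ↦ ?_⟩
  -- for `w ∈ (x, y)` the right derivative at `w` is at most the slope from `w` to `y`, which is
  -- close to the slope from `x` to `y`, itself close to the right derivative at `x`
  have hslope := hf.hasDerivWithinAt_rightDeriv_of_mem_interior (x := x) (by simp)
  rw [hasDerivWithinAt_iff_tendsto_slope, sdiff_singleton_eq_self (by simp)] at hslope
  obtain ⟨y, hyu, hxy⟩ := ((hslope.eventually (gt_mem_nhds hu)).and self_mem_nhdsWithin).exists
  have hcy : ContinuousAt (fun w ↦ slope f w y) x := by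
    simp_rw [slope_def_field]
    exact (continuous_const.sub hcont).continuousAt.div
      (continuous_const.sub continuous_id).continuousAt (sub_ne_zero.2 hxy.ne')
  filter_upwards [nhdsWithin_le_nhds (hcy.eventually (gt_mem_nhds hyu)), Ioo_mem_nhdsGT hxy]
    with w hwu hw
  exact (hf.rightDeriv_le_slope_of_mem_interior (by simp) (mem_univ y) hw.2).trans_lt hwu

noncomputable def rightDerivStieltjes (hf : ConvexOn ℝ univ f) : StieltjesFunction ℝ where
  toFun x := derivWithin f (Ioi x) x
  mono' := hf.monotone_rightDeriv
  right_continuous' := hf.continuousWithinAt_rightDeriv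

@[simp]
lemma rightDerivStieltjes_apply (hf : ConvexOn ℝ univ f) (x : ℝ) :
    hf.rightDerivStieltjes x = derivWithin f (Ioi x) x :=
  rfl

lemma sub_sub_one_le_rightDeriv (hf : ConvexOn ℝ univ f) (x : ℝ) :
    f x - f (x - 1) ≤ derivWithin f (Ioi x) x := by
  have h := (hf.slope_le_leftDeriv_of_mem_interior (mem_univ (x - 1)) (by simp)
    (by linarith)).trans (hf.leftDeriv_le_rightDeriv_of_mem_interior (x := x) (by simp))
  rwa [slope_def_field, sub_sub_cancel, div_one] at h

lemma rightDeriv_le_add_one_sub (hf : ConvexOn ℝ univ f) (x : ℝ) :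
    derivWithin f (Ioi x) x ≤ f (x + 1) - f x := by
  have h := hf.rightDeriv_le_slope_of_mem_interior (x := x) (y := x + 1) (by simp) (mem_univ _)
    (by linarith)
  rwa [slope_def_field, add_sub_cancel_left, div_one] at h

lemma tendsto_rightDeriv_of_tendsto_sub_mul (hf : ConvexOn ℝ univ f) {l : Filter ℝ}
    (hl₁ : Tendsto (· + 1) l l) (hl₂ : Tendsto (· - 1) l l) {a c : ℝ}
    (h : Tendsto (fun x ↦ f x - a * x) l (𝓝 c)) :
    Tendsto (fun x ↦ derivWithin f (Ioi x) x) l (𝓝 a) := by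
  have hdiff : ∀ d : ℝ, Tendsto (· + d) l l →
      Tendsto (fun x ↦ f (x + d) - f x) l (𝓝 (a * d)) := by
    intro d hd
    have := ((h.comp hd).sub h).add_const (a * d)
    rw [sub_self, zero_add] at this
    exact this.congr fun x ↦ by simp only [Function.comp_apply]; ring
  refine tendsto_of_tendsto_of_tendsto_of_le_of_le ?_ ?_ hf.sub_sub_one_le_rightDeriv
    hf.rightDeriv_le_add_one_sub
  · simpa [sub_eq_add_neg] using (hdiff (-1) (by simpa [sub_eq_add_neg] using hl₂)).neg
  · simpa using hdiff 1 hl₁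

lemma tendsto_rightDeriv_atBot (hf : ConvexOn ℝ univ f) (hbot : Tendsto f atBot (𝓝 0)) :
    Tendsto (fun x ↦ derivWithin f (Ioi x) x) atBot (𝓝 0) :=
  hf.tendsto_rightDeriv_of_tendsto_sub_mul (tendsto_atBot_add_const_right _ _ tendsto_id)
    (tendsto_atBot_add_const_right _ _ tendsto_id) (by simpa using hbot)

lemma tendsto_rightDeriv_atTop (hf : ConvexOn ℝ univ f) {c : ℝ}
    (htop : Tendsto (fun s ↦ f s - s) atTop (𝓝 c)) :
    Tendsto (fun x ↦ derivWithin f (Ioi x) x) atTop (𝓝 1) :=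
  hf.tendsto_rightDeriv_of_tendsto_sub_mul (tendsto_atTop_add_const_right _ _ tendsto_id)
    (tendsto_atTop_add_const_right _ _ tendsto_id) (by simpa using htop)

lemma integral_rightDeriv (hf : ConvexOn ℝ univ f) (a b : ℝ) :
    ∫ t in a..b, derivWithin f (Ioi t) t = f b - f a :=
  intervalIntegral.integral_eq_sub_of_hasDeriv_right
    ((hf.continuousOn isOpen_univ).mono (subset_univ _))
    (fun _ _ ↦ hf.hasDerivWithinAt_rightDeriv_of_mem_interior (by simp))
    hf.monotone_rightDeriv.intervalIntegrable

lemma integrableOn_Ioc_rightDeriv (hf : ConvexOn ℝ univ f) (a b : ℝ) :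
    IntegrableOn (fun t ↦ derivWithin f (Ioi t) t) (Ioc a b) :=
  (hf.monotone_rightDeriv.locallyIntegrable.integrableOn_isCompact isCompact_Icc).mono_set
    Ioc_subset_Icc_self

lemma monotone_of_tendsto_atBot (hf : ConvexOn ℝ univ f) (hbot : Tendsto f atBot (𝓝 0)) :
    Monotone f := fun a b hab ↦ by
  have hnonneg := hf.monotone_rightDeriv.le_of_tendsto (hf.tendsto_rightDeriv_atBot hbot)
  have := intervalIntegral.integral_nonneg (μ := volume) hab fun t _ ↦ hnonneg t
  rwa [hf.integral_rightDeriv, sub_nonneg] at this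

lemma antitone_sub_id_of_tendsto_atTop (hf : ConvexOn ℝ univ f) {c : ℝ}
    (htop : Tendsto (fun s ↦ f s - s) atTop (𝓝 c)) : Antitone fun s ↦ f s - s :=
  fun a b hab ↦ by
  have hle := hf.monotone_rightDeriv.ge_of_tendsto (hf.tendsto_rightDeriv_atTop htop)
  have := intervalIntegral.integral_mono_on (μ := volume) hab
    hf.monotone_rightDeriv.intervalIntegrable intervalIntegrable_const fun t _ ↦ hle t
  rw [hf.integral_rightDeriv, intervalIntegral.integral_const, smul_eq_mul, mul_one] at this
  linarith

lemma integrableOn_Iic_rightDeriv (hf : ConvexOn ℝ univ f) (hbot : Tendsto f atBot (𝓝 0))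
    (s : ℝ) : IntegrableOn (fun t ↦ derivWithin f (Ioi t) t) (Iic s) := by
  have hnonneg := hf.monotone_rightDeriv.le_of_tendsto (hf.tendsto_rightDeriv_atBot hbot)
  refine integrableOn_Iic_of_intervalIntegral_norm_bounded (f s) s
    (fun a ↦ hf.integrableOn_Ioc_rightDeriv a s) tendsto_id (Eventually.of_forall fun a ↦ ?_)
  simp_rw [fun x ↦ Real.norm_of_nonneg (hnonneg x), hf.integral_rightDeriv]
  linarith [(hf.monotone_of_tendsto_atBot hbot).le_of_tendsto hbot a]

lemma integral_Iic_rightDeriv (hf : ConvexOn ℝ univ f) (hbot : Tendsto f atBot (𝓝 0))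
    (s : ℝ) : ∫ t in Iic s, derivWithin f (Ioi t) t = f s := by
  refine tendsto_nhds_unique (intervalIntegral_tendsto_integral_Iic s
    (hf.integrableOn_Iic_rightDeriv hbot s) tendsto_id) ?_
  simpa [hf.integral_rightDeriv] using (tendsto_const_nhds (x := f s)).sub hbot

lemma integrableOn_Ioi_one_sub_rightDeriv (hf : ConvexOn ℝ univ f) {c : ℝ}
    (htop : Tendsto (fun s ↦ f s - s) atTop (𝓝 c)) (s : ℝ) :
    IntegrableOn (fun t ↦ 1 - derivWithin f (Ioi t) t) (Ioi s) := by
  have hle := hf.monotone_rightDeriv.ge_of_tendsto (hf.tendsto_rightDeriv_atTop htop)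
  refine integrableOn_Ioi_of_intervalIntegral_norm_bounded (f s - s - c) s
    (fun b ↦ (integrableOn_const (by simp)).sub (hf.integrableOn_Ioc_rightDeriv s b)) tendsto_id
    (Eventually.of_forall fun b ↦ ?_)
  simp_rw [fun x ↦ Real.norm_of_nonneg (sub_nonneg.2 (hle x))]
  rw [intervalIntegral.integral_sub intervalIntegrable_const
    hf.monotone_rightDeriv.intervalIntegrable, hf.integral_rightDeriv,
    intervalIntegral.integral_const, smul_eq_mul, mul_one]
  linarith [(hf.antitone_sub_id_of_tendsto_atTop htop).le_of_tendsto htop b]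

end ConvexOn

lemma lintegral_ofReal_sub_eq_setLIntegral_measure_Iic (m : Measure ℝ) [SFinite m] (s : ℝ) :
    ∫⁻ x, ENNReal.ofReal (s - x) ∂m = ∫⁻ t in Iic s, m (Iic t) := by
  have hA : MeasurableSet {p : ℝ × ℝ | p.1 ≤ p.2} := measurableSet_le measurable_fst measurable_snd
  calc ∫⁻ x, ENNReal.ofReal (s - x) ∂m
      = ∫⁻ x, volume.restrict (Iic s) (Prod.mk x ⁻¹' {p | p.1 ≤ p.2}) ∂m := by
        refine lintegral_congr fun x ↦ ?_
        rw [Measure.restrict_apply' measurableSet_Iic,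
          show Prod.mk x ⁻¹' {p : ℝ × ℝ | p.1 ≤ p.2} = Ici x from rfl, Ici_inter_Iic,
          Real.volume_Icc]
    _ = ∫⁻ t in Iic s, m (Iic t) := by
        rw [← Measure.prod_apply hA, Measure.prod_apply_symm hA]
        rfl

lemma lintegral_ofReal_sub_eq_setLIntegral_measure_Ioi (m : Measure ℝ) [SFinite m] (s : ℝ) :
    ∫⁻ x, ENNReal.ofReal (x - s) ∂m = ∫⁻ t in Ici s, m (Ioi t) := by
  have hA : MeasurableSet {p : ℝ × ℝ | p.2 < p.1} := measurableSet_lt measurable_snd measurable_fst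
  calc ∫⁻ x, ENNReal.ofReal (x - s) ∂m
      = ∫⁻ x, volume.restrict (Ici s) (Prod.mk x ⁻¹' {p | p.2 < p.1}) ∂m := by
        refine lintegral_congr fun x ↦ ?_
        rw [Measure.restrict_apply' measurableSet_Ici,
          show Prod.mk x ⁻¹' {p : ℝ × ℝ | p.2 < p.1} = Iio x from rfl, inter_comm,
          Ici_inter_Iio, Real.volume_Ico]
    _ = ∫⁻ t in Ici s, m (Ioi t) := by
        rw [← Measure.prod_apply hA, Measure.prod_apply_symm hA]
        rfl

lemma integrable_id_of_lintegral_ofReal_ne_top {m : Measure ℝ}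
    (hneg : ∫⁻ x, ENNReal.ofReal (0 - x) ∂m ≠ ∞) (hpos : ∫⁻ x, ENNReal.ofReal (x - 0) ∂m ≠ ∞) :
    Integrable (fun x : ℝ ↦ x) m := by
  refine ((integrable_toReal_of_lintegral_ne_top (by fun_prop) hpos).sub
    (integrable_toReal_of_lintegral_ne_top (by fun_prop) hneg)).congr
    (Eventually.of_forall fun x ↦ ?_)
  rcases le_total x 0 with h | h <;> simp [ENNReal.toReal_ofReal', h]

def SuperCompleteAbove {α : Type*} (r : α → α → Prop) : Prop :=
  ∀ K : Set α, K.Nonempty → (∃ b, ∀ μ ∈ K, r μ b) →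
    ∃ σ, (∀ μ ∈ K, r μ σ) ∧ (∀ b, (∀ μ ∈ K, r μ b) → r σ b) ∧
      ∃ K₀ ⊆ K, K₀.Countable ∧ (∀ μ ∈ K₀, r μ σ) ∧ (∀ b, (∀ μ ∈ K₀, r μ b) → r σ b)

lemma superComplete_iff (r : P1 → P1 → Prop) :
    SuperComplete r ↔ SuperCompleteAbove r ∧ SuperCompleteAbove (flip r) :=
  Iff.rfl

lemma superCompleteAbove_of_forall_exists_countable {α : Type*} {r : α → α → Prop}
    (hlub : ∀ K : Set α, K.Nonempty → (∃ b, ∀ μ ∈ K, r μ b) →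
      ∃ σ, (∀ μ ∈ K, r μ σ) ∧ ∀ b, (∀ μ ∈ K, r μ b) → r σ b)
    (hcount : ∀ K : Set α, ∃ K₀ ⊆ K, K₀.Countable ∧
      ∀ b, (∀ μ ∈ K₀, r μ b) → ∀ μ ∈ K, r μ b) :
    SuperCompleteAbove r := by
  intro K hK hbdd
  obtain ⟨σ, hub, hleast⟩ := hlub K hK hbdd
  obtain ⟨K₀, hK₀, hc, hK₀K⟩ := hcount K
  exact ⟨σ, hub, hleast, K₀, hK₀, hc, fun μ hμ ↦ hub μ (hK₀ hμ), fun b hb ↦ hleast b (hK₀K b hb)⟩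

lemma SuperCompleteAbove.of_equiv {α β : Type*} {r : β → β → Prop} {r' : α → α → Prop}
    (h : SuperCompleteAbove r) (e : α ≃ β) (he : ∀ a b, r' a b ↔ r (e a) (e b)) :
    SuperCompleteAbove r' := by
  intro K hK ⟨b, hb⟩
  obtain ⟨σ, hub, hleast, K₀, hK₀, hc, hub₀, hleast₀⟩ :=
    h (e '' K) (hK.image e) ⟨e b, forall_mem_image.2 fun μ hμ ↦ (he μ b).1 (hb μ hμ)⟩
  simp only [he] at hb ⊢
  refine ⟨e.symm σ, fun μ hμ ↦ ?_, fun b hb ↦ ?_, e ⁻¹' K₀, fun μ hμ ↦ by simpa using hK₀ hμ,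
    hc.preimage e.injective, fun μ hμ ↦ ?_, fun b hb ↦ ?_⟩ <;> rw [e.apply_symm_apply]
  · exact hub _ (mem_image_of_mem e hμ)
  · exact hleast _ (forall_mem_image.2 hb)
  · exact hub₀ _ hμ
  · refine hleast₀ _ fun ν hν ↦ ?_
    obtain ⟨μ, -, rfl⟩ := hK₀ hν
    exact hb μ hν

namespace P1

instance (μ : P1) : IsProbabilityMeasure μ.1 := μ.2.1

lemma integrable_id (μ : P1) : Integrable (fun x : ℝ ↦ x) μ.1 := μ.2.2

lemma integrable_max_sub_zero (μ : P1) (s : ℝ) : Integrable (fun x : ℝ ↦ max (s - x) 0) μ.1 :=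
  ((integrable_const s).sub μ.integrable_id).pos_part

noncomputable instance : InvolutiveNeg P1 where
  neg μ := ⟨μ.1.map Neg.neg, Measure.isProbabilityMeasure_map measurable_neg.aemeasurable,
    (integrable_map_measure aestronglyMeasurable_id measurable_neg.aemeasurable).2
      μ.integrable_id.neg⟩
  neg_neg μ := Subtype.ext <| by
    change (μ.1.map Neg.neg).map Neg.neg = μ.1
    simp [Measure.map_map measurable_neg measurable_neg]

lemma val_neg (μ : P1) : (-μ).1 = μ.1.map Neg.neg := rfl

end P1

section IntDF

variable (μ : P1)

lemma intDF_le_add_dist (s t : ℝ) : IntDF μ s ≤ IntDF μ t + dist s t := by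
  have hadd : IntDF μ t + dist s t = ∫ x, (max (t - x) 0 + dist s t) ∂μ.1 := by
    simp [IntDF, integral_add (μ.integrable_max_sub_zero t) (integrable_const _)]
  rw [hadd, IntDF, Real.dist_eq]
  refine integral_mono (μ.integrable_max_sub_zero s)
    ((μ.integrable_max_sub_zero t).add (integrable_const _)) fun x ↦ max_le ?_ (by positivity)
  linarith [le_max_left (t - x) 0, le_abs_self (s - t)]

lemma lipschitzWith_intDF : LipschitzWith 1 (IntDF μ) :=
  LipschitzWith.of_le_add (intDF_le_add_dist μ)

lemma convexOn_intDF : ConvexOn ℝ univ (IntDF μ) := by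
  refine ⟨convex_univ, fun s _ t _ a b ha hb hab ↦ ?_⟩
  have hs := (μ.integrable_max_sub_zero s).const_mul a
  have ht := (μ.integrable_max_sub_zero t).const_mul b
  simp only [IntDF, smul_eq_mul, ← integral_const_mul]
  rw [← integral_add hs ht]
  refine integral_mono (μ.integrable_max_sub_zero _) (hs.add ht)
    fun x ↦ max_le ?_ (by positivity)
  linear_combination mul_le_mul_of_nonneg_left (le_max_left (s - x) 0) ha +
    mul_le_mul_of_nonneg_left (le_max_left (t - x) 0) hb + x * hab

lemma sub_integral_le_intDF (s : ℝ) : s - ∫ x, x ∂μ.1 ≤ IntDF μ s := by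
  have hsub : ∫ x, (s - x) ∂μ.1 = s - ∫ x, x ∂μ.1 := by
    simp [integral_sub (integrable_const s) μ.integrable_id]
  rw [← hsub]
  exact integral_mono ((integrable_const s).sub μ.integrable_id) (μ.integrable_max_sub_zero s)
    fun x ↦ le_max_left _ _

lemma tendsto_intDF_atBot : Tendsto (IntDF μ) atBot (𝓝 0) := by
  have hbound : ∀ᶠ s in atBot, ∀ᵐ x ∂μ.1, ‖max (s - x) 0‖ ≤ max (0 - x) 0 :=
    (eventually_le_atBot 0).mono fun s hs ↦ Eventually.of_forall fun x ↦ by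
      rw [Real.norm_of_nonneg (le_max_right _ _)]
      exact max_le_max (by linarith) le_rfl
  have hlim : ∀ x : ℝ, Tendsto (fun s ↦ max (s - x) 0) atBot (𝓝 0) := fun x ↦
    tendsto_const_nhds.congr' <| (eventually_le_atBot x).mono fun s hs ↦
      (max_eq_right (sub_nonpos.2 hs)).symm
  have h := tendsto_integral_filter_of_dominated_convergence _
    (Eventually.of_forall fun s ↦ (μ.integrable_max_sub_zero s).aestronglyMeasurable) hbound
    (μ.integrable_max_sub_zero 0) (Eventually.of_forall hlim)
  rwa [integral_zero] at h

lemma intSF_eq_intDF_neg (s : ℝ) : IntSF μ s = IntDF (-μ) (-s) := by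
  rw [IntDF, P1.val_neg, integral_map measurable_neg.aemeasurable (by fun_prop), IntSF]
  simp_rw [sub_neg_eq_add, neg_add_eq_sub]

end IntDF

lemma exists_intDF_eq {G : ℝ → ℝ} (hG : ConvexOn ℝ univ G) (hbot : Tendsto G atBot (𝓝 0))
    {c : ℝ} (htop : Tendsto (fun s ↦ G s - s) atTop (𝓝 c)) : ∃ μ : P1, IntDF μ = G := by
  set F := hG.rightDerivStieltjes
  have hFbot : Tendsto F atBot (𝓝 0) := hG.tendsto_rightDeriv_atBot hbot
  have hFtop : Tendsto F atTop (𝓝 1) := hG.tendsto_rightDeriv_atTop htop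
  have hprob : IsProbabilityMeasure F.measure := F.isProbabilityMeasure hFbot hFtop
  have hleft : ∀ s, ∫⁻ x, ENNReal.ofReal (s - x) ∂F.measure = ENNReal.ofReal (G s) := by
    intro s
    rw [lintegral_ofReal_sub_eq_setLIntegral_measure_Iic, ← hG.integral_Iic_rightDeriv hbot s,
      ofReal_integral_eq_lintegral_ofReal (hG.integrableOn_Iic_rightDeriv hbot s)
        (Eventually.of_forall fun t ↦ F.mono.le_of_tendsto hFbot t)]
    simp [F, F.measure_Iic hFbot]
  have hright : ∫⁻ x, ENNReal.ofReal (x - 0) ∂F.measure ≠ ∞ := by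
    rw [lintegral_ofReal_sub_eq_setLIntegral_measure_Ioi]
    simp_rw [F.measure_Ioi hFtop]
    exact ((integrableOn_Ici_iff_integrableOn_Ioi).2
      (hG.integrableOn_Ioi_one_sub_rightDeriv htop 0)).lintegral_lt_top.ne
  refine ⟨⟨F.measure, hprob, integrable_id_of_lintegral_ofReal_ne_top
    (by rw [hleft]; exact ENNReal.ofReal_ne_top) hright⟩, funext fun s ↦ ?_⟩
  change ∫ x, max (s - x) 0 ∂F.measure = G s
  simp_rw [← ENNReal.toReal_ofReal']
  rw [integral_toReal (by fun_prop) (Eventually.of_forall fun _ ↦ ENNReal.ofReal_lt_top), hleft,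
    ENNReal.toReal_ofReal ((hG.monotone_of_tendsto_atBot hbot).le_of_tendsto hbot s)]

lemma exists_isLUB_intDF {S : Set P1} (hS : S.Nonempty) (ν : P1)
    (hν : ∀ μ ∈ S, IntDF μ ≤ IntDF ν) : ∃ τ : P1, IsLUB (IntDF '' S) (IntDF τ) := by
  have := hS.to_subtype
  obtain ⟨μ₀, hμ₀⟩ := hS
  have hbdd : ∀ s, BddAbove (range fun μ : S ↦ IntDF μ s) :=
    fun s ↦ ⟨IntDF ν s, forall_mem_range.2 fun μ ↦ hν μ μ.2 s⟩
  set H : ℝ → ℝ := fun s ↦ ⨆ μ : S, IntDF μ s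
  have hle : ∀ μ ∈ S, IntDF μ ≤ H := fun μ hμ s ↦ le_ciSup (hbdd s) ⟨μ, hμ⟩
  have hconv : ConvexOn ℝ univ H := convexOn_ciSup (fun μ ↦ convexOn_intDF μ) fun s _ ↦ hbdd s
  have hbot : Tendsto H atBot (𝓝 0) :=
    tendsto_of_tendsto_of_tendsto_of_le_of_le (tendsto_intDF_atBot μ₀) (tendsto_intDF_atBot ν)
      (hle μ₀ hμ₀) fun s ↦ ciSup_le fun μ ↦ hν μ μ.2 s
  have hanti : Antitone fun s ↦ H s - s := fun s t hst ↦ by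
    have : H t ≤ H s + (t - s) := ciSup_le fun μ ↦ by
      have := intDF_le_add_dist μ t s
      rw [Real.dist_eq, abs_of_nonneg (sub_nonneg.2 hst)] at this
      linarith [hle μ μ.2 s]
    linarith
  have hbddBelow : BddBelow (range fun s ↦ H s - s) :=
    ⟨-∫ x, x ∂μ₀.1, forall_mem_range.2 fun s ↦ by
      linarith [sub_integral_le_intDF μ₀ s, hle μ₀ hμ₀ s]⟩
  obtain ⟨τ, hτ⟩ := exists_intDF_eq hconv hbot (tendsto_atTop_ciInf hanti hbddBelow)
  refine ⟨τ, forall_mem_image.2 fun μ hμ ↦ hτ ▸ hle μ hμ, fun g hg s ↦ ?_⟩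
  rw [hτ]
  exact ciSup_le fun μ ↦ hg (mem_image_of_mem _ μ.2) s

lemma superCompleteAbove_icv : SuperCompleteAbove Icv := by
  refine superCompleteAbove_of_forall_exists_countable (fun K ⟨μ₀, hμ₀⟩ hbdd ↦ ?_) fun K ↦ ?_
  · -- the pointwise infimum of the `IntDF μ`, `μ ∈ K`, need not be convex: take instead the
    -- pointwise supremum of the `IntDF b` over all upper bounds `b` of `K`
    obtain ⟨σ, hσ⟩ := exists_isLUB_intDF (S := {b | ∀ μ ∈ K, Icv μ b}) hbdd μ₀
      fun b hb ↦ hb μ₀ hμ₀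
    exact ⟨σ, fun μ hμ ↦ hσ.2 (forall_mem_image.2 fun b hb ↦ hb μ hμ),
      fun b hb ↦ hσ.1 (mem_image_of_mem _ hb)⟩
  · obtain ⟨K₀, hK₀, hc, h⟩ := exists_countable_subset_forall_ge_of_forall_ge K IntDF
      fun μ _ ↦ (lipschitzWith_intDF μ).continuous
    exact ⟨K₀, hK₀, hc, fun b hb ↦ h (IntDF b) (lipschitzWith_intDF b).continuous hb⟩

lemma superCompleteAbove_flip_icv : SuperCompleteAbove (flip Icv) := by
  refine superCompleteAbove_of_forall_exists_countable (fun K hK ⟨ν, hν⟩ ↦ ?_) fun K ↦ ?_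
  · obtain ⟨τ, hτ⟩ := exists_isLUB_intDF hK ν hν
    exact ⟨τ, fun μ hμ ↦ hτ.1 (mem_image_of_mem _ hμ), fun b hb ↦ hτ.2 (forall_mem_image.2 hb)⟩
  · obtain ⟨K₀, hK₀, hc, h⟩ := exists_countable_subset_forall_le_of_forall_le K IntDF
      fun μ _ ↦ (lipschitzWith_intDF μ).continuous
    exact ⟨K₀, hK₀, hc, fun b hb ↦ h (IntDF b) (lipschitzWith_intDF b).continuous hb⟩

lemma icx_iff_icv_neg (μ ν : P1) : Icx μ ν ↔ Icv (-ν) (-μ) := by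
  simp only [Icx, Icv, intSF_eq_intDF_neg]
  exact ⟨fun h s ↦ by simpa using h (-s), fun h s ↦ h (-s)⟩

/-- **Statement 14.** The lattices `(P₁(ℝ), ≤icv)` and `(P₁(ℝ), ≤icx)` are Dedekind super
complete: every nonempty subset bounded above has a least upper bound and a countable subset
with the same least upper bound, and dually for subsets bounded below. -/
theorem stmt_14 : SuperComplete Icv ∧ SuperComplete Icx :=
  ⟨(superComplete_iff Icv).2 ⟨superCompleteAbove_icv, superCompleteAbove_flip_icv⟩,
    (superComplete_iff Icx).2
      ⟨superCompleteAbove_flip_icv.of_equiv (Equiv.neg P1) fun μ ν ↦ icx_iff_icv_neg μ ν,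
        superCompleteAbove_icv.of_equiv (Equiv.neg P1) fun μ ν ↦ icx_iff_icv_neg ν μ⟩⟩
end

section
/- Let L be a Dedekind σ-complete lattice. Then L is Dedekind super complete if and only if there exist a Dedekind super complete lattice R and a map F : L → R which is strictly increasing, i.e. F(x) ≤ F(y) whenever x ≤ y, and x = y whenever x ≤ y and F(x) = F(y). -/
universe u

/-- A lattice is Dedekind σ-complete if every nonempty countable subset bounded above has a
least upper bound, and every nonempty countable subset bounded below has a greatest lower
bound. -/
def DedekindSigmaComplete (L : Type u) [Lattice L] : Prop :=
  (∀ K : Set L, K.Nonempty → K.Countable → BddAbove K → ∃ a, IsLUB K a) ∧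
  (∀ K : Set L, K.Nonempty → K.Countable → BddBelow K → ∃ a, IsGLB K a)

/-- A lattice is Dedekind super complete if every nonempty subset bounded above has a least
upper bound together with a countable subset having the same least upper bound, and dually
for subsets bounded below. -/
def DedekindSuperComplete (L : Type u) [Lattice L] : Prop :=
  (∀ K : Set L, K.Nonempty → BddAbove K →
    ∃ a, IsLUB K a ∧ ∃ K₀ ⊆ K, K₀.Countable ∧ IsLUB K₀ a) ∧
  (∀ K : Set L, K.Nonempty → BddBelow K →
    ∃ a, IsGLB K a ∧ ∃ K₀ ⊆ K, K₀.Countable ∧ IsGLB K₀ a)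

lemma aux_lub {L R : Type u} [Lattice L] [Lattice R]
    (hσ : ∀ K : Set L, K.Nonempty → K.Countable → BddAbove K → ∃ a, IsLUB K a)
    (hR : ∀ K : Set R, K.Nonempty → BddAbove K →
      ∃ a, IsLUB K a ∧ ∃ K₀ ⊆ K, K₀.Countable ∧ IsLUB K₀ a)
    (F : L → R) (hmono : ∀ x y : L, x ≤ y → F x ≤ F y)
    (hstrict : ∀ x y : L, x ≤ y → F x = F y → x = y) :
    ∀ K : Set L, K.Nonempty → BddAbove K →
      ∃ a, IsLUB K a ∧ ∃ K₀ ⊆ K, K₀.Countable ∧ IsLUB K₀ a := by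
  intro K hne hbdd
  obtain ⟨b, hb⟩ := hbdd
  obtain ⟨k₀, hk₀⟩ := hne
  -- U : set of lubs of nonempty countable subsets of K
  set U : Set L := {u | ∃ C : Set L, C ⊆ K ∧ C.Nonempty ∧ C.Countable ∧ IsLUB C u} with hU
  have hUne : U.Nonempty :=
    ⟨k₀, {k₀}, by simpa using hk₀, ⟨k₀, rfl⟩, Set.countable_singleton _, isLUB_singleton⟩
  have hUb : ∀ u ∈ U, u ≤ b := by
    rintro u ⟨C, hCK, hCne, _, hClub⟩
    exact hClub.2 fun x hx => hb (hCK hx)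
  have hFUbdd : BddAbove (F '' U) := by
    refine ⟨F b, ?_⟩
    rintro s ⟨u, hu, rfl⟩
    exact hmono u b (hUb u hu)
  obtain ⟨r, hr, S₀, hS₀sub, hS₀c, hS₀lub⟩ := hR (F '' U) (hUne.image F) hFUbdd
  have hex : ∀ s ∈ S₀, ∃ C : Set L,
      C ⊆ K ∧ C.Nonempty ∧ C.Countable ∧ ∃ u, IsLUB C u ∧ F u = s := by
    intro s hs
    obtain ⟨u, hu, rfl⟩ := hS₀sub hs
    obtain ⟨C, h1, h2, h3, h4⟩ := hu
    exact ⟨C, h1, h2, h3, u, h4, rfl⟩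
  choose Cf hCf1 hCf2 hCf3 uf hCf4 hCf5 using hex
  have : Countable S₀ := hS₀c.to_subtype
  set E : Set L := {k₀} ∪ ⋃ (s : S₀), Cf s s.2 with hE
  have hEc : E.Countable :=
    (Set.countable_singleton _).union (Set.countable_iUnion fun s => hCf3 s s.2)
  have hEK : E ⊆ K := by
    rintro x (hx | hx)
    · simpa using hx ▸ hk₀
    · obtain ⟨s, hs⟩ := Set.mem_iUnion.1 hx
      exact hCf1 s s.2 hs
  have hEne : E.Nonempty := ⟨k₀, Or.inl rfl⟩
  obtain ⟨c, hc⟩ := hσ E hEne hEc ⟨b, fun x hx => hb (hEK hx)⟩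
  have hcU : c ∈ U := ⟨E, hEK, hEne, hEc, hc⟩
  have hFcr : F c ≤ r := hr.1 ⟨c, hcU, rfl⟩
  have hrFc : r ≤ F c := by
    apply hS₀lub.2
    intro s hs
    have hufc : uf s hs ≤ c := by
      apply (hCf4 s hs).2
      intro x hx
      exact hc.1 (Or.inr (Set.mem_iUnion.2 ⟨⟨s, hs⟩, hx⟩))
    calc s = F (uf s hs) := (hCf5 s hs).symm
      _ ≤ F c := hmono _ _ hufc
  have hFc : F c = r := le_antisymm hFcr hrFc
  -- c is an upper bound of K
  have hcub : ∀ k ∈ K, k ≤ c := by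
    intro k hk
    obtain ⟨c', hc'⟩ := hσ (insert k E) ⟨k, Set.mem_insert _ _⟩ (hEc.insert k)
      ⟨b, by rintro x (rfl | hx); exacts [hb hk, hb (hEK hx)]⟩
    have hcc' : c ≤ c' := hc.2 fun x hx => hc'.1 (Set.mem_insert_of_mem _ hx)
    have hc'U : c' ∈ U := ⟨insert k E, Set.insert_subset hk hEK,
      ⟨k, Set.mem_insert _ _⟩, hEc.insert k, hc'⟩
    have : F c = F c' := le_antisymm (hmono _ _ hcc') (hFc ▸ hr.1 ⟨c', hc'U, rfl⟩)
    have : c = c' := hstrict _ _ hcc' this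
    exact this ▸ hc'.1 (Set.mem_insert _ _)
  have hlub : IsLUB K c := ⟨fun k hk => hcub k hk, fun x hx => hc.2 fun e he => hx (hEK he)⟩
  exact ⟨c, hlub, E, hEK, hEc, hc⟩

/-- **Statement 19.** A Dedekind σ-complete lattice `L` is Dedekind super complete if and
only if there exist a Dedekind super complete lattice `R` and a strictly increasing map
`F : L → R`, i.e. `F` is monotone and `x ≤ y` together with `F x = F y` implies `x = y`. -/
theorem stmt_19 (L : Type u) [Lattice L] (hσ : DedekindSigmaComplete L) :
    DedekindSuperComplete L ↔
      ∃ (R : Type u) (instR : Lattice R), @DedekindSuperComplete R instR ∧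
        ∃ F : L → R, (∀ x y : L, x ≤ y → F x ≤ F y) ∧
          (∀ x y : L, x ≤ y → F x = F y → x = y) := by
  constructor
  · intro h
    refine ⟨L, ‹Lattice L›, h, id, ?_, ?_⟩
    · exact fun x y hxy => hxy
    · exact fun x y _ e => e
  · rintro ⟨R, instR, hRsc, F, hmono, hstrict⟩
    constructor
    · exact aux_lub hσ.1 hRsc.1 F hmono hstrict
    · exact aux_lub (L := Lᵒᵈ) (R := Rᵒᵈ) hσ.2 hRsc.2 F
        (fun x y h => hmono y x h) (fun x y h e => (hstrict y x h e.symm).symm)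
end
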